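/- arXiv:1811.06640 — 9 statements merged into one kernel-verified Lean document; each statement's English description precedes it below -/
import Mathlib

section
/- Let w be a scalar with |w| > 1 and 1 ≤ p < ∞. Define B on ℓ^p by (Bx)_1 = 0 and (Bx)_{k+1} = w^{-k} x_k for k ∈ ℕ. Then for every n ∈ ℕ and x ∈ ℓ^p: (i) Bⁿx ∈ ℓ^p with (Bⁿx)_k = 0 for k ≤ n and (Bⁿx)_{n+j} = w^{-[(n+j−1)+(n+j−2)+⋯+j]} x_j for j ∈ ℕ; (ii) ‖Bⁿx‖_p ≤ |w|^{-(n+(n−1)+⋯+1)} ‖x‖_p; (iii) Bⁿx ∈ D(Aⁿ) and AⁿBⁿx = x, i.e., B is a bounded right inverse of A. -/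
/-!
`Bⁿ` shifts a sequence `n` places to the right and multiplies its `j`-th entry by
`w^{-[(n+j-1)+⋯+j]}`, whose modulus is at most `|w|^{-(n+⋯+1)}` because `|w| > 1`. Since a
right shift is an isometry of `ℓ^p`, this gives the norm bound, and `ABx = x` iterates to
`AⁿBⁿx = x`.
-/

open scoped ENNReal
open Function Set Finset

section Reindex

variable {α β E : Type*} [NormedAddCommGroup E] {p : ℝ≥0∞} {e : α → β} {f : β → E}

theorem memℓp_comp_iff_of_support_subset_range (hp : 0 < p.toReal) (he : Injective e)
    (hf : support f ⊆ range e) : Memℓp (f ∘ e) p ↔ Memℓp f p := by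
  rw [memℓp_gen_iff hp, memℓp_gen_iff hp]
  refine he.summable_iff (f := fun b => ‖f b‖ ^ p.toReal) fun b hb => ?_
  rw [support_subset_iff'.mp hf b hb, norm_zero, Real.zero_rpow hp.ne']

theorem lp.norm_comp_of_support_subset_range (hp : 0 < p.toReal) (he : Injective e)
    (hf : support f ⊆ range e) (hfe : Memℓp (f ∘ e) p) (hfp : Memℓp f p) :
    ‖(⟨f ∘ e, hfe⟩ : lp (fun _ => E) p)‖ = ‖(⟨f, hfp⟩ : lp (fun _ => E) p)‖ := by
  have hsupp : support (fun b => ‖f b‖ ^ p.toReal) ⊆ range e := by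
    refine support_subset_iff'.mpr fun b hb => ?_
    simp [support_subset_iff'.mp hf b hb, Real.zero_rpow hp.ne']
  rw [lp.norm_eq_tsum_rpow hp, lp.norm_eq_tsum_rpow hp]
  exact congrArg (· ^ (1 / p.toReal)) (he.tsum_eq hsupp)

end Reindex

section WeightedShift

variable {R : Type*} [MonoidWithZero R] {a : R} {B : (ℕ → R) → ℕ → R}

theorem iterate_weightedShift_apply_of_lt (hB0 : ∀ x, B x 0 = 0)
    (hB : ∀ x k, B x (k + 1) = a ^ (k + 1) * x k) (x : ℕ → R) :
    ∀ n, ∀ k < n, B^[n] x k = 0 := by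
  intro n
  induction n with
  | zero => exact fun k hk => absurd hk (Nat.not_lt_zero k)
  | succ n ih =>
    rintro (_ | k) hk
    · rw [iterate_succ_apply', hB0]
    · rw [iterate_succ_apply', hB, ih k (by omega), mul_zero]

theorem iterate_weightedShift_apply_add (hB : ∀ x k, B x (k + 1) = a ^ (k + 1) * x k)
    (x : ℕ → R) (n j : ℕ) :
    B^[n] x (n + j) = a ^ (∑ t ∈ range n, (j + 1 + t)) * x j := by
  induction n with
  | zero => simp
  | succ n ih =>
    rw [iterate_succ_apply', show n + 1 + j = n + j + 1 by omega, hB, ih, ← mul_assoc,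
      ← pow_add, sum_range_succ]
    congr 2
    omega

end WeightedShift

theorem leftInverse_of_weightedShifts {G : Type*} [GroupWithZero G] {w : G} (hw : w ≠ 0)
    {A B : (ℕ → G) → ℕ → G} (hA : ∀ x k, A x k = w ^ (k + 1) * x (k + 1))
    (hB : ∀ x k, B x (k + 1) = w⁻¹ ^ (k + 1) * x k) : LeftInverse A B := fun x => by
  funext k
  rw [hA, hB, ← mul_assoc, inv_pow, mul_inv_cancel₀ (pow_ne_zero _ hw), one_mul]

theorem norm_pow_le_norm_pow_of_norm_le_one {𝕜 : Type*} [NormedDivisionRing 𝕜] {a : 𝕜}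
    (ha : ‖a‖ ≤ 1) {m n : ℕ} (h : m ≤ n) : ‖a ^ n‖ ≤ ‖a ^ m‖ := by
  rw [norm_pow, norm_pow]
  exact pow_le_pow_of_le_one (norm_nonneg a) ha h

/-- Let `|w| > 1`, `1 ≤ p < ∞`, `A` the weighted backward shift
(0-based: `A x k = w ^ (k+1) * x (k+1)`) and `B` the weighted forward shift (0-based:
`B x 0 = 0`, `B x (k+1) = w⁻¹ ^ (k+1) * x k`) on `ℓ^p`. Then for every `n` and every
`x ∈ ℓ^p`: (i) `Bⁿx ∈ ℓ^p`, with `(Bⁿx)ₖ = 0` for the first `n` entries and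
`(Bⁿx)ₙ₊ⱼ = w^{-[(n+j-1)+⋯+j]} xⱼ`; (ii) `‖Bⁿx‖_p ≤ |w|^{-(n+(n-1)+⋯+1)} ‖x‖_p`;
(iii) `Bⁿx ∈ D(Aⁿ)` and `AⁿBⁿx = x`, i.e. `B` is a bounded right inverse of `A`. -/
theorem rolewicz_lp_right_inverse {𝕜 : Type*} [RCLike 𝕜]
    (w : 𝕜) (hw : 1 < ‖w‖) (p : ℝ≥0∞) [Fact (1 ≤ p)] (hp' : p ≠ ∞)
    (A : (ℕ → 𝕜) → ℕ → 𝕜) (hA : ∀ x k, A x k = w ^ (k + 1) * x (k + 1))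
    (B : (ℕ → 𝕜) → ℕ → 𝕜)
    (hB0 : ∀ x : ℕ → 𝕜, B x 0 = 0)
    (hB : ∀ (x : ℕ → 𝕜) (k : ℕ), B x (k + 1) = w⁻¹ ^ (k + 1) * x k) :
    ∀ (n : ℕ) (x : lp (fun _ : ℕ => 𝕜) p),
      ∃ hBn : Memℓp (B^[n] ⇑x) p,
        (∀ k < n, B^[n] (⇑x) k = 0) ∧
        (∀ j : ℕ, B^[n] (⇑x) (n + j) =
          w⁻¹ ^ (∑ t ∈ Finset.range n, (j + 1 + t)) * x j) ∧
        ‖(⟨B^[n] ⇑x, hBn⟩ : lp (fun _ : ℕ => 𝕜) p)‖ ≤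
          ‖w‖⁻¹ ^ (∑ t ∈ Finset.range n, (t + 1)) * ‖x‖ ∧
        Memℓp (A^[n] (B^[n] ⇑x)) p ∧
        A^[n] (B^[n] ⇑x) = ⇑x := by
  intro n x
  have hw0 : w ≠ 0 := norm_pos_iff.mp (one_pos.trans hw)
  have hp0 : p ≠ 0 := (one_pos.trans_le Fact.out).ne'
  have hp : 0 < p.toReal := ENNReal.toReal_pos hp0 hp'
  have hzero := iterate_weightedShift_apply_of_lt hB0 hB x n
  have hformula := iterate_weightedShift_apply_add hB x n
  set c := w⁻¹ ^ ∑ t ∈ range n, (t + 1)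
  have hbound : ∀ j, ‖(B^[n] x ∘ (n + ·)) j‖ ≤ ‖(c • x) j‖ := fun j => by
    rw [comp_apply, hformula, lp.coeFn_smul, Pi.smul_apply, smul_eq_mul, norm_mul, norm_mul]
    gcongr
    exact norm_pow_le_norm_pow_of_norm_le_one (by simpa using (inv_lt_one_of_one_lt₀ hw).le)
      (sum_le_sum fun t _ => by omega)
  have hsupp : support (B^[n] x) ⊆ range (n + ·) := support_subset_iff'.mpr fun k hk =>
    hzero k (by_contra fun hkn => hk ⟨k - n, show n + (k - n) = k by omega⟩)
  have hshift : Memℓp (B^[n] x ∘ (n + ·)) p := (lp.memℓp (c • x)).mono' hbound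
  have hBn := (memℓp_comp_iff_of_support_subset_range hp (add_right_injective n) hsupp).mp hshift
  have hAB : A^[n] (B^[n] x) = x := (leftInverse_of_weightedShifts hw0 hA hB).iterate n x
  refine ⟨hBn, hzero, hformula, ?_, by rw [hAB]; exact lp.memℓp x, hAB⟩
  calc ‖(⟨B^[n] x, hBn⟩ : lp (fun _ : ℕ => 𝕜) p)‖
      = ‖(⟨B^[n] x ∘ (n + ·), hshift⟩ : lp (fun _ : ℕ => 𝕜) p)‖ :=
        (lp.norm_comp_of_support_subset_range hp (add_right_injective n) hsupp hshift hBn).symm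
    _ ≤ ‖c • x‖ := lp.norm_mono hp0 hbound
    _ = ‖w‖⁻¹ ^ (∑ t ∈ range n, (t + 1)) * ‖x‖ := by
        rw [lp.norm_const_smul hp0, norm_pow, norm_inv]
end

section
/- Let w be a scalar (real or complex) with |w| > 1 and 1 ≤ p < ∞. The weighted backward shift A with domain D(A) = {x ∈ ℓ^p : Ax ∈ ℓ^p} is hypercyclic: there exists x ∈ C^∞(A) := ⋂_{n≥0} D(Aⁿ) such that the orbit {Aⁿx : n ∈ ℤ₊} is dense in ℓ^p. -/
open scoped ENNReal

/-!
Let `S` be the weighted forward shift, a right inverse of `A` with `‖S‖ ≤ ‖w‖⁻¹` on `ℓ^p`.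
Enumerate finitely supported vectors `Y j` so that every member of a countable dense set recurs
infinitely often, and put `x = ∑ j, S^{m j} Y j` for a rapidly increasing sequence `m`. Then
`A^{m j} x = ∑ i, A^{m j} S^{m i} Y i`: the terms `i < j` vanish because `A^{m j - m i}`
pushes the support of `Y i` off the left end, the term `i = j` is `Y j`, and the terms `i > j`
are `S^{m i - m j} Y i`, of norm at most `2⁻ⁱ` once the gaps `m i - m j` are large. Hence
`‖A^{m j} x - Y j‖ ≤ 2⁻ʲ`, and the same estimates show that every `Aⁿ x` lies in `ℓ^p`.
-/

open Filter Topology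

namespace WeightedShift

section Shifts

variable {𝕜 : Type*} [NormedField 𝕜]

def backwardShift (w : 𝕜) : (ℕ → 𝕜) →L[𝕜] ℕ → 𝕜 :=
  ContinuousLinearMap.pi fun k => w ^ (k + 1) • ContinuousLinearMap.proj (k + 1)

@[simp]
lemma backwardShift_apply (w : 𝕜) (x : ℕ → 𝕜) (k : ℕ) :
    backwardShift w x k = w ^ (k + 1) * x (k + 1) :=
  rfl

def forwardShift (w : 𝕜) (y : ℕ → 𝕜) : ℕ → 𝕜
  | 0 => 0
  | k + 1 => (w ^ (k + 1))⁻¹ * y k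

variable {w : 𝕜}

lemma leftInverse_backwardShift_forwardShift (hw : w ≠ 0) :
    Function.LeftInverse (backwardShift w) (forwardShift w) := fun y =>
  funext fun k => by simp [forwardShift, hw]

lemma iterate_backwardShift_iterate_forwardShift_of_le (hw : w ≠ 0) {n m : ℕ} (h : n ≤ m)
    (y : ℕ → 𝕜) :
    (backwardShift w)^[n] ((forwardShift w)^[m] y) = (forwardShift w)^[m - n] y := by
  obtain ⟨k, rfl⟩ := Nat.exists_eq_add_of_le h
  rw [Nat.add_sub_cancel_left, Function.iterate_add_apply,
    (leftInverse_backwardShift_forwardShift hw).iterate n]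

lemma iterate_backwardShift_iterate_forwardShift_of_ge (hw : w ≠ 0) {n m : ℕ} (h : m ≤ n)
    (y : ℕ → 𝕜) :
    (backwardShift w)^[n] ((forwardShift w)^[m] y) = (backwardShift w)^[n - m] y := by
  obtain ⟨k, rfl⟩ := Nat.exists_eq_add_of_le h
  rw [Nat.add_sub_cancel_left, add_comm, Function.iterate_add_apply,
    (leftInverse_backwardShift_forwardShift hw).iterate m]

lemma iterate_backwardShift_apply_eq_zero {N : ℕ} {y : ℕ → 𝕜} (hy : ∀ k, N ≤ k → y k = 0)
    (n : ℕ) {k : ℕ} (hk : N ≤ k + n) : (backwardShift w)^[n] y k = 0 := by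
  induction n generalizing k with
  | zero => exact hy k hk
  | succ n ih =>
    rw [Function.iterate_succ_apply', backwardShift_apply, ih (by omega), mul_zero]

lemma hasSum_iterate_backwardShift {ι : Type*} {f : ι → ℕ → 𝕜} {x : ℕ → 𝕜} (hf : HasSum f x)
    (n : ℕ) : HasSum (fun j => (backwardShift w)^[n] (f j)) ((backwardShift w)^[n] x) := by
  induction n with
  | zero => simpa
  | succ n ih => simpa only [Function.iterate_succ_apply'] using (backwardShift w).hasSum ih

end Shifts

section Lp

lemma memℓp_of_forall_ge_eq_zero {E : Type*} [NormedAddCommGroup E] {p : ℝ≥0∞} {N : ℕ}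
    {y : ℕ → E} (hy : ∀ k, N ≤ k → y k = 0) : Memℓp y p :=
  (memℓp_zero ((Set.finite_Iio N).subset fun k hk => Set.mem_Iio.2 <|
    lt_of_not_ge fun hNk => hk (hy k hNk))).of_exponent_ge zero_le

variable {α : Type*} {E : α → Type*} [∀ i, NormedAddCommGroup (E i)] {p : ℝ≥0∞} [Fact (1 ≤ p)]

lemma hasSum_lp_coeFn {ι : Type*} {g : ι → lp E p} {G : lp E p} (hG : HasSum g G) :
    HasSum (fun j => ⇑(g j)) ⇑G :=
  hG.map (lp.coeFnAddMonoidHom E p) lp.uniformContinuous_coe.continuous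

lemma exists_hasSum_lp_of_hasSum_coeFn [∀ i, CompleteSpace (E i)] {ι : Type*} {g : ι → lp E p}
    (hg : Summable fun j => ‖g j‖) {f : ∀ i, E i} (hf : HasSum (fun j => ⇑(g j)) f) :
    ∃ G : lp E p, HasSum g G ∧ ⇑G = f :=
  let ⟨G, hG⟩ := hg.of_norm
  ⟨G, hG, (hasSum_lp_coeFn hG).unique hf⟩

end Lp

lemma exists_denseRange_lp_of_forall_ge_eq_zero {E : Type*} [NormedAddCommGroup E]
    [TopologicalSpace.SeparableSpace E] {p : ℝ≥0∞} [Fact (1 ≤ p)] (hp : p ≠ ∞) :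
    ∃ d : ℕ → lp (fun _ : ℕ => E) p, DenseRange d ∧ ∀ a, ∃ N, ∀ k, N ≤ k → d a k = 0 := by
  set T : Set (lp (fun _ : ℕ => E) p) :=
    ⋃ n : ℕ, Set.range fun c : ℕ → E => ∑ k ∈ Finset.range n, lp.single p k (c k)
  have hT_sep : TopologicalSpace.IsSeparable T :=
    TopologicalSpace.isSeparable_iUnion.2 fun n => TopologicalSpace.isSeparable_range <|
      continuous_finsetSum _ fun k _ => (lp.isometry_single k).continuous.comp (continuous_apply k)
  have hT_dense : Dense T := fun f =>
    mem_closure_of_tendsto (lp.hasSum_single hp f).tendsto_sum_nat <| Eventually.of_forall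
      fun n => Set.mem_iUnion.2 ⟨n, f, rfl⟩
  have hT_supp : ∀ f ∈ T, ∃ N, ∀ k, N ≤ k → f k = 0 := by
    rintro _ ⟨_, ⟨n, rfl⟩, c, rfl⟩
    refine ⟨n, fun k hk => ?_⟩
    simp only [lp.coeFn_sum, Finset.sum_apply, lp.single_apply]
    exact Finset.sum_eq_zero fun i hi =>
      Pi.single_eq_of_ne (by rw [Finset.mem_range] at hi; omega) _
  -- `t ⊆ T`, not merely `T ⊆ closure t`, so the members of `t` are still finitely supported.
  obtain ⟨t, htT, htc, hTt⟩ := hT_sep.exists_countable_dense_subset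
  have ht_dense : Dense t := dense_closure.1 (hT_dense.mono hTt)
  obtain ⟨d, rfl⟩ := htc.exists_eq_range ht_dense.nonempty
  exact ⟨d, ht_dense, fun a => hT_supp _ (htT ⟨a, rfl⟩)⟩

lemma denseRange_of_dist_le_unpair {X : Type*} [PseudoMetricSpace X] {d f : ℕ → X}
    (hd : DenseRange d) {ε : ℕ → ℝ} (hε : Tendsto ε atTop (𝓝 0))
    (hf : ∀ j, dist (f j) (d (Nat.unpair j).1) ≤ ε j) : DenseRange f := by
  refine Metric.denseRange_iff.2 fun z r hr => ?_
  obtain ⟨a, ha⟩ := Metric.denseRange_iff.1 hd z (r / 2) (half_pos hr)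
  obtain ⟨J, hJ⟩ := eventually_atTop.1 (hε.eventually (gt_mem_nhds (half_pos hr)))
  have hfa : dist (d a) (f (Nat.pair a J)) < r / 2 := by
    rw [dist_comm]
    simpa only [Nat.unpair_pair] using (hf (Nat.pair a J)).trans_lt (hJ _ (Nat.right_le_pair a J))
  exact ⟨Nat.pair a J, (dist_triangle _ _ _).trans_lt ((add_lt_add ha hfa).trans_eq (add_halves r))⟩

section LpShifts

variable {𝕜 : Type*} [NormedField 𝕜] {w : 𝕜} {p : ℝ≥0∞} [Fact (1 ≤ p)]

local notation "ℓp" => lp (fun _ : ℕ => 𝕜) p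

lemma exists_lp_forwardShift (hp : p ≠ ∞) (hw : 1 ≤ ‖w‖) (y : ℓp) :
    ∃ z : ℓp, ⇑z = forwardShift w y ∧ ‖z‖ ≤ ‖w‖⁻¹ * ‖y‖ := by
  have hP : 0 < p.toReal := ENNReal.toReal_pos (zero_lt_one.trans_le Fact.out).ne' hp
  have hle : ∀ k, ‖forwardShift w y (k + 1)‖ ^ p.toReal ≤
      (‖w‖⁻¹) ^ p.toReal * ‖y k‖ ^ p.toReal := fun k => by
    rw [← Real.mul_rpow (by positivity) (norm_nonneg _)]
    refine Real.rpow_le_rpow (norm_nonneg _) ?_ hP.le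
    rw [forwardShift, norm_mul, norm_inv, norm_pow]
    gcongr
    exact le_self_pow₀ hw (Nat.succ_ne_zero k)
  have hy := (lp.memℓp y).summable hP |>.mul_left ((‖w‖⁻¹) ^ p.toReal)
  have hsum : Summable fun k => ‖forwardShift w y (k + 1)‖ ^ p.toReal :=
    hy.of_nonneg_of_le (fun _ => by positivity) hle
  have hsum' : Summable fun k => ‖forwardShift w y k‖ ^ p.toReal :=
    (summable_nat_add_iff 1).1 hsum
  refine ⟨⟨forwardShift w y, memℓp_gen hsum'⟩, rfl, lp.norm_le_of_tsum_le hP (by positivity) ?_⟩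
  calc ∑' k, ‖forwardShift w y k‖ ^ p.toReal = ∑' k, ‖forwardShift w y (k + 1)‖ ^ p.toReal := by
        rw [hsum'.tsum_eq_zero_add, forwardShift, norm_zero, Real.zero_rpow hP.ne', zero_add]
    _ ≤ ∑' k, (‖w‖⁻¹) ^ p.toReal * ‖y k‖ ^ p.toReal := hsum.tsum_le_tsum hle hy
    _ = (‖w‖⁻¹ * ‖y‖) ^ p.toReal := by
        rw [tsum_mul_left, ← lp.norm_rpow_eq_tsum hP, Real.mul_rpow (by positivity) (norm_nonneg _)]

lemma exists_lp_iterate_forwardShift (hp : p ≠ ∞) (hw : 1 ≤ ‖w‖) (m : ℕ) (y : ℓp) :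
    ∃ z : ℓp, ⇑z = (forwardShift w)^[m] y ∧ ‖z‖ ≤ ‖w‖⁻¹ ^ m * ‖y‖ := by
  induction m with
  | zero => exact ⟨y, rfl, by simp⟩
  | succ m ih =>
    obtain ⟨z, hz, hz_norm⟩ := ih
    obtain ⟨z', hz', hz'_norm⟩ := exists_lp_forwardShift hp hw z
    refine ⟨z', by rw [hz', hz, Function.iterate_succ_apply'], hz'_norm.trans ?_⟩
    rw [pow_succ', mul_assoc]
    gcongr

lemma exists_lp_iterate_backwardShift_iterate_forwardShift (hp : p ≠ ∞) (hw : 1 ≤ ‖w‖)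
    {N : ℕ} (y : ℓp) (hy : ∀ k, N ≤ k → y k = 0) (n m : ℕ) :
    ∃ z : ℓp, ⇑z = (backwardShift w)^[n] ((forwardShift w)^[m] y) ∧
      (n ≤ m → ‖z‖ ≤ ‖w‖⁻¹ ^ (m - n) * ‖y‖) := by
  have hw0 : w ≠ 0 := norm_pos_iff.1 (zero_lt_one.trans_le hw)
  rcases le_or_gt n m with hnm | hmn
  · rw [iterate_backwardShift_iterate_forwardShift_of_le hw0 hnm]
    obtain ⟨z, hz, hz_norm⟩ := exists_lp_iterate_forwardShift hp hw (m - n) y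
    exact ⟨z, hz, fun _ => hz_norm⟩
  · rw [iterate_backwardShift_iterate_forwardShift_of_ge hw0 hmn.le]
    refine ⟨⟨_, memℓp_of_forall_ge_eq_zero (N := N) fun k hk =>
      iterate_backwardShift_apply_eq_zero hy (n - m) (show N ≤ k + (n - m) by omega)⟩, rfl,
      fun h => absurd h hmn.not_ge⟩

end LpShifts

lemma exists_gapped_seq (N : ℕ → ℕ) (c : ℕ → ℝ) {r : ℝ} (hr : 1 < r) :
    ∃ m : ℕ → ℕ, ∀ j, m j + N j < m (j + 1) ∧ c j ≤ r ^ (m (j + 1) - m j) := by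
  choose K hK using fun j => pow_unbounded_of_one_lt (c j) hr
  refine ⟨fun j => ∑ i ∈ Finset.range j, (N i + K i + 1), fun j => ?_⟩
  simp only [Finset.sum_range_succ]
  refine ⟨by omega, (hK j).le.trans (pow_le_pow_right₀ hr.le (by omega))⟩

section Construction

variable {𝕜 : Type*} [NormedField 𝕜] {w : 𝕜} {p : ℝ≥0∞}
-- `g n j` stands for `Aⁿ S^{m j} Y j`, the `j`-th term of `Aⁿ x` where `x = ∑ j, S^{m j} Y j`.
variable {Y : ℕ → lp (fun _ : ℕ => 𝕜) p} {N m : ℕ → ℕ} {g : ℕ → ℕ → lp (fun _ : ℕ => 𝕜) p}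

lemma term_eq_zero_of_lt (hw : w ≠ 0) (hY : ∀ j k, N j ≤ k → Y j k = 0)
    (hgap : ∀ j, m j + N j < m (j + 1))
    (hg : ∀ n j, ⇑(g n j) = (backwardShift w)^[n] ((forwardShift w)^[m j] (Y j)))
    {i j : ℕ} (hij : i < j) : g (m j) i = 0 := by
  have hm : StrictMono m := strictMono_nat_of_lt_succ fun j => by linarith [hgap j]
  have hmij : m (i + 1) ≤ m j := hm.monotone hij
  refine lp.ext (funext fun k => ?_)
  rw [hg, iterate_backwardShift_iterate_forwardShift_of_ge hw (hm.monotone hij.le)]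
  exact iterate_backwardShift_apply_eq_zero (hY i) _ (by have := hgap i; omega)

lemma term_self (hw : w ≠ 0)
    (hg : ∀ n j, ⇑(g n j) = (backwardShift w)^[n] ((forwardShift w)^[m j] (Y j))) (j : ℕ) :
    g (m j) j = Y j :=
  lp.ext <| by rw [hg, iterate_backwardShift_iterate_forwardShift_of_le hw le_rfl, Nat.sub_self,
    Function.iterate_zero_apply]

variable [Fact (1 ≤ p)]

lemma inv_pow_mul_norm_le_inv_two_pow (hw : 1 ≤ ‖w‖)
    (hgrowth : ∀ j, 2 ^ (j + 1) * ‖Y (j + 1)‖ ≤ ‖w‖ ^ (m (j + 1) - m j)) {j n : ℕ}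
    (hn : n ≤ m j) : ‖w‖⁻¹ ^ (m (j + 1) - n) * ‖Y (j + 1)‖ ≤ 2⁻¹ ^ (j + 1) := by
  have hw0 : 0 < ‖w‖ := zero_lt_one.trans_le hw
  calc ‖w‖⁻¹ ^ (m (j + 1) - n) * ‖Y (j + 1)‖
      ≤ ‖w‖⁻¹ ^ (m (j + 1) - m j) * ‖Y (j + 1)‖ := by
        gcongr ?_ * _
        exact pow_le_pow_of_le_one (by positivity) (inv_le_one_of_one_le₀ hw) (by omega)
    _ ≤ ‖w‖⁻¹ ^ (m (j + 1) - m j) * (2⁻¹ ^ (j + 1) * ‖w‖ ^ (m (j + 1) - m j)) := by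
        gcongr
        rw [inv_pow, ← div_eq_inv_mul, le_div_iff₀' (by positivity)]
        exact hgrowth j
    _ = 2⁻¹ ^ (j + 1) := by
        rw [inv_pow, mul_left_comm, inv_mul_cancel₀ (by positivity), mul_one]

lemma norm_term_succ_le (hw : 1 ≤ ‖w‖) (hgap : ∀ j, m j + N j < m (j + 1))
    (hgrowth : ∀ j, 2 ^ (j + 1) * ‖Y (j + 1)‖ ≤ ‖w‖ ^ (m (j + 1) - m j))
    (hg_norm : ∀ n j, n ≤ m j → ‖g n j‖ ≤ ‖w‖⁻¹ ^ (m j - n) * ‖Y j‖) {n j : ℕ} (hn : n ≤ m j) :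
    ‖g n (j + 1)‖ ≤ 2⁻¹ ^ (j + 1) :=
  (hg_norm n (j + 1) (by linarith [hgap j])).trans (inv_pow_mul_norm_le_inv_two_pow hw hgrowth hn)

lemma summable_norm_term (hw : 1 ≤ ‖w‖) (hgap : ∀ j, m j + N j < m (j + 1))
    (hgrowth : ∀ j, 2 ^ (j + 1) * ‖Y (j + 1)‖ ≤ ‖w‖ ^ (m (j + 1) - m j))
    (hg_norm : ∀ n j, n ≤ m j → ‖g n j‖ ≤ ‖w‖⁻¹ ^ (m j - n) * ‖Y j‖) (n : ℕ) :
    Summable fun j => ‖g n j‖ := by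
  have hm : StrictMono m := strictMono_nat_of_lt_succ fun j => by linarith [hgap j]
  refine (summable_nat_add_iff (n + 1)).1 <| Summable.of_nonneg_of_le (fun _ => norm_nonneg _)
    (fun j => norm_term_succ_le hw hgap hgrowth hg_norm ((Nat.le_add_left n j).trans (hm.id_le _)))
    ((summable_nat_add_iff (n + 1)).2 (summable_geometric_of_lt_one (by norm_num) (by norm_num)))

lemma norm_sub_le_of_hasSum (hw : 1 ≤ ‖w‖) (hY : ∀ j k, N j ≤ k → Y j k = 0)
    (hgap : ∀ j, m j + N j < m (j + 1))
    (hgrowth : ∀ j, 2 ^ (j + 1) * ‖Y (j + 1)‖ ≤ ‖w‖ ^ (m (j + 1) - m j))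
    (hg : ∀ n j, ⇑(g n j) = (backwardShift w)^[n] ((forwardShift w)^[m j] (Y j)))
    (hg_norm : ∀ n j, n ≤ m j → ‖g n j‖ ≤ ‖w‖⁻¹ ^ (m j - n) * ‖Y j‖)
    {j : ℕ} {G : lp (fun _ : ℕ => 𝕜) p} (hG : HasSum (g (m j)) G) : ‖G - Y j‖ ≤ 2⁻¹ ^ j := by
  have hw0 : w ≠ 0 := norm_pos_iff.1 (zero_lt_one.trans_le hw)
  have hm : StrictMono m := strictMono_nat_of_lt_succ fun j => by linarith [hgap j]
  have hhead : ∑ i ∈ Finset.range (j + 1), g (m j) i = Y j := by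
    rw [Finset.sum_eq_single_of_mem j (Finset.self_mem_range_succ j) fun i hi hij =>
      term_eq_zero_of_lt hw0 hY hgap hg (by rw [Finset.mem_range] at hi; omega), term_self hw0 hg]
  have htail := (hasSum_nat_add_iff' (j + 1)).2 hG
  rw [hhead] at htail
  refine htail.norm_le_of_bounded (hasSum_geometric_two' (2⁻¹ ^ j)) fun i => ?_
  calc ‖g (m j) (i + (j + 1))‖ ≤ 2⁻¹ ^ (i + j + 1) :=
        norm_term_succ_le hw hgap hgrowth hg_norm (hm.monotone (Nat.le_add_left j i))
    _ = 2⁻¹ ^ j / 2 / 2 ^ i := by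
        rw [pow_succ, pow_add, inv_pow]
        ring

end Construction

theorem exists_orbit_dist_le {𝕜 : Type*} [NormedField 𝕜] [CompleteSpace 𝕜] {w : 𝕜}
    (hw : 1 < ‖w‖) {p : ℝ≥0∞} [Fact (1 ≤ p)] (hp : p ≠ ∞) (Y : ℕ → lp (fun _ : ℕ => 𝕜) p)
    (N : ℕ → ℕ) (hY : ∀ j k, N j ≤ k → Y j k = 0) :
    ∃ (x : lp (fun _ : ℕ => 𝕜) p) (hx : ∀ n, Memℓp ((backwardShift w)^[n] x) p) (m : ℕ → ℕ),
      ∀ j, dist (⟨(backwardShift w)^[m j] x, hx (m j)⟩ : lp (fun _ : ℕ => 𝕜) p) (Y j) ≤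
        2⁻¹ ^ j := by
  obtain ⟨m, hm⟩ := exists_gapped_seq N (fun j => 2 ^ (j + 1) * ‖Y (j + 1)‖) hw
  choose hgap hgrowth using hm
  choose g hg hg_norm using fun n j =>
    exists_lp_iterate_backwardShift_iterate_forwardShift hp hw.le (Y j) (hY j) n (m j)
  have hsum := summable_norm_term hw.le hgap hgrowth hg_norm
  obtain ⟨x, hx⟩ := (hsum 0).of_norm
  have horbit : ∀ n, ∃ G, HasSum (g n) G ∧ ⇑G = (backwardShift w)^[n] x := fun n =>
    exists_hasSum_lp_of_hasSum_coeFn (hsum n) <| by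
      have h := hasSum_iterate_backwardShift (w := w) (hasSum_lp_coeFn hx) n
      have heq : (fun j => (backwardShift w)^[n] ⇑(g 0 j)) = fun j => ⇑(g n j) :=
        funext fun j => by rw [hg 0 j, hg n j, Function.iterate_zero_apply]
      rwa [heq] at h
  choose G hG hG_coe using horbit
  have hx_mem : ∀ n, Memℓp ((backwardShift w)^[n] x) p := fun n => hG_coe n ▸ lp.memℓp (G n)
  refine ⟨x, hx_mem, m, fun j => ?_⟩
  have hGj : (⟨_, hx_mem (m j)⟩ : lp (fun _ : ℕ => 𝕜) p) = G (m j) := Subtype.ext (hG_coe _).symm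
  rw [dist_eq_norm, hGj]
  exact norm_sub_le_of_hasSum hw.le hY hgap hgrowth hg hg_norm (hG (m j))

end WeightedShift

open WeightedShift

/-- The weighted backward shift `A` (0-based:
`A x k = w ^ (k+1) * x (k+1)`) with `|w| > 1`, with maximal domain
`D(A) = {x ∈ ℓ^p | Ax ∈ ℓ^p}`, is hypercyclic on `ℓ^p` (`1 ≤ p < ∞`): there exists
`x ∈ C^∞(A) = ⋂ₙ D(Aⁿ)` whose orbit `{Aⁿx : n ∈ ℤ₊}` is dense in `ℓ^p`. -/
theorem rolewicz_lp_hypercyclic {𝕜 : Type*} [RCLike 𝕜]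
    (w : 𝕜) (hw : 1 < ‖w‖) (p : ℝ≥0∞) [Fact (1 ≤ p)] (hp' : p ≠ ∞)
    (A : (ℕ → 𝕜) → ℕ → 𝕜) (hA : ∀ x k, A x k = w ^ (k + 1) * x (k + 1)) :
    ∃ (x : lp (fun _ : ℕ => 𝕜) p) (hx : ∀ n : ℕ, Memℓp (A^[n] ⇑x) p),
      Dense (Set.range fun n : ℕ => (⟨A^[n] ⇑x, hx n⟩ : lp (fun _ : ℕ => 𝕜) p)) := by
  obtain rfl : A = backwardShift w := funext fun x => funext (hA x)
  obtain ⟨d, hd, hd_supp⟩ := exists_denseRange_lp_of_forall_ge_eq_zero (E := 𝕜) hp'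
  choose N hN using hd_supp
  obtain ⟨x, hx, m, hxm⟩ := exists_orbit_dist_le hw hp' (fun j => d (Nat.unpair j).1)
    (fun j => N (Nat.unpair j).1) fun j => hN _
  refine ⟨x, hx, Dense.mono (Set.range_comp_subset_range m _) ?_⟩
  exact denseRange_of_dist_le_unpair hd
    (tendsto_pow_atTop_nhds_zero_of_lt_one (by norm_num) (by norm_num)) hxm
end

section
/- Let w be a scalar (real or complex) with |w| > 1. The weighted backward shift A with domain D(A) = {x ∈ c₀ : Ax ∈ c₀} is hypercyclic: there exists x ∈ C^∞(A) := ⋂_{n≥0} D(Aⁿ) such that the orbit {Aⁿx : n ∈ ℤ₊} is dense in c₀. -/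
/-- A vanishing sequence, packaged as an element of `c₀ = C₀(ℕ, 𝕜)` (sup norm). -/
noncomputable def toC0 {𝕜 : Type*} [RCLike 𝕜] (x : ℕ → 𝕜)
    (h : Filter.Tendsto x Filter.atTop (nhds 0)) : ZeroAtInftyContinuousMap ℕ 𝕜 :=
  ⟨⟨x, continuous_of_discreteTopology⟩, by simpa [Filter.cocompact_eq_cofinite, Nat.cofinite_eq_atTop] using h⟩

/-!
Let `S` be the right inverse of the weighted shift, `(S y) (k + 1) = y k / a k`. Enumerate the
finite sequences with entries in a countable dense subset of `𝕜`, each infinitely often, as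
`L 0, L 1, …`, and let `x` carry `S^(n i) (L i)` on the block starting at `n i`. Then in
`A^(n j) x` the blocks before `j` are shifted out, block `j` becomes `L j`, and each later block
becomes `S^(n i - n j) (L i)`; since `‖S^m y‖ ≤ c^(-m) ‖y‖`, gaps `n (i + 1) - n i` growing fast
enough make the latter `≤ 2^(-i)`. This gives density of the orbit, and the same bound shows
`A^m x ∈ c₀` for every `m`.
-/

open Filter Topology Finset
open scoped ZeroAtInfty

namespace WeightedShift

section WeightProd

variable {𝕜 : Type*} [NormedField 𝕜] (a : ℕ → 𝕜)

def weightProd (n k : ℕ) : 𝕜 := ∏ i ∈ range n, a (k + i)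

@[simp]
lemma weightProd_zero (k : ℕ) : weightProd a 0 k = 1 := prod_range_zero _

lemma weightProd_add (m n k : ℕ) :
    weightProd a (m + n) k = weightProd a m k * weightProd a n (k + m) := by
  simp only [weightProd, prod_range_add, add_assoc]

lemma iterate_apply_eq_weightProd_mul {A : (ℕ → 𝕜) → ℕ → 𝕜}
    (hA : ∀ x k, A x k = a k * x (k + 1)) (n : ℕ) (x : ℕ → 𝕜) (k : ℕ) :
    A^[n] x k = weightProd a n k * x (k + n) := by
  induction n generalizing x with
  | zero => simp
  | succ n ih =>
    rw [Function.iterate_succ_apply, ih, hA]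
    simp only [weightProd, prod_range_succ, ← add_assoc]
    ring

variable {a} {c : ℝ}

lemma pow_le_norm_weightProd (hc : 0 ≤ c) (ha : ∀ k, c ≤ ‖a k‖) (n k : ℕ) :
    c ^ n ≤ ‖weightProd a n k‖ := by
  rw [weightProd, norm_prod]
  calc c ^ n = ∏ _i ∈ range n, c := by rw [prod_const, card_range]
    _ ≤ ∏ i ∈ range n, ‖a (k + i)‖ := prod_le_prod (fun _ _ => hc) fun i _ => ha (k + i)

lemma norm_div_weightProd_le (hc : 0 < c) (ha : ∀ k, c ≤ ‖a k‖) {y : 𝕜} {B : ℝ} (hy : ‖y‖ ≤ B)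
    (n k : ℕ) : ‖y / weightProd a n k‖ ≤ B / c ^ n := by
  rw [norm_div]
  exact div_le_div₀ ((norm_nonneg y).trans hy) hy (pow_pos hc n)
    (pow_le_norm_weightProd hc.le ha n k)

end WeightProd

section BlockIndex

variable {n : ℕ → ℕ}

def blockIndex (n : ℕ → ℕ) (k : ℕ) : ℕ := Nat.findGreatest (fun j => n j ≤ k) k

variable (hn : StrictMono n) (h0 : n 0 = 0)
include hn h0

lemma le_blockIndex_iff {j k : ℕ} : j ≤ blockIndex n k ↔ n j ≤ k :=
  ⟨fun h => (hn.monotone h).trans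
      (Nat.findGreatest_spec (P := fun j => n j ≤ k) k.zero_le (h0.trans_le k.zero_le)),
    fun h => Nat.le_findGreatest ((hn.id_le j).trans h) h⟩

lemma blockIndex_le (k : ℕ) : n (blockIndex n k) ≤ k := (le_blockIndex_iff hn h0).1 le_rfl

lemma tendsto_blockIndex : Tendsto (blockIndex n) atTop atTop :=
  tendsto_atTop.2 fun j => eventually_atTop.2 ⟨n j, fun _ => (le_blockIndex_iff hn h0).2⟩

end BlockIndex

section BlockVector

variable {𝕜 : Type*} [NormedField 𝕜]

def listBound (l : List 𝕜) : ℝ := (l.map (‖·‖)).sum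

lemma listBound_nonneg (l : List 𝕜) : 0 ≤ listBound l :=
  List.sum_nonneg fun _ hx => by
    obtain ⟨y, -, rfl⟩ := List.mem_map.1 hx
    exact norm_nonneg y

lemma norm_getD_le_listBound (l : List 𝕜) (k : ℕ) : ‖l.getD k 0‖ ≤ listBound l := by
  induction l generalizing k with
  | nil => simp [listBound]
  | cons y l ih =>
    have hl := listBound_nonneg l
    cases k with
    | zero => simpa [listBound] using hl
    | succ k => simpa [listBound] using (ih k).trans (le_add_of_nonneg_left (norm_nonneg y))

structure IsAdaptedBlocks (c : ℝ) (L : ℕ → List 𝕜) (n : ℕ → ℕ) : Prop where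
  zero : n 0 = 0
  length_lt : ∀ j, n j + (L j).length < n (j + 1)
  bound_le : ∀ j, 2 ^ (j + 1) * listBound (L (j + 1)) ≤ c ^ (n (j + 1) - n j)

variable {a : ℕ → 𝕜} {c : ℝ} {L : ℕ → List 𝕜} {n : ℕ → ℕ}

lemma IsAdaptedBlocks.strictMono (hB : IsAdaptedBlocks c L n) : StrictMono n :=
  strictMono_nat_of_lt_succ fun j => (Nat.le_add_right _ _).trans_lt (hB.length_lt j)

lemma exists_isAdaptedBlocks (hc : 1 < c) (L : ℕ → List 𝕜) : ∃ n, IsAdaptedBlocks c L n := by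
  have hgap : ∀ j, ∃ d, (L j).length < d ∧ 2 ^ (j + 1) * listBound (L (j + 1)) ≤ c ^ d := by
    intro j
    obtain ⟨t, ht⟩ := pow_unbounded_of_one_lt (2 ^ (j + 1) * listBound (L (j + 1))) hc
    exact ⟨max ((L j).length + 1) t, by omega,
      ht.le.trans (pow_le_pow_right₀ hc.le (le_max_right _ _))⟩
  choose d hd using hgap
  refine ⟨fun j => ∑ i ∈ range j, d i, sum_range_zero d, fun j => ?_, fun j => ?_⟩
  · simpa [sum_range_succ] using (hd j).1
  · simpa [sum_range_succ] using (hd j).2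

/-- On the block `[n i, n (i + 1))` this is `L i` moved `n i` places to the right by the right
inverse of the shift, so that `n i` applications of the shift bring `L i` back to the front. -/
noncomputable def blockVector (a : ℕ → 𝕜) (L : ℕ → List 𝕜) (n : ℕ → ℕ) (k : ℕ) : 𝕜 :=
  (L (blockIndex n k)).getD (k - n (blockIndex n k)) 0 /
    weightProd a (n (blockIndex n k)) (k - n (blockIndex n k))

lemma ne_zero_of_le_norm (hc : 0 < c) (ha : ∀ k, c ≤ ‖a k‖) (k : ℕ) : a k ≠ 0 :=
  norm_pos_iff.1 (hc.trans_le (ha k))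

lemma weightProd_ne_zero (ha : ∀ k, a k ≠ 0) (m k : ℕ) : weightProd a m k ≠ 0 :=
  prod_ne_zero_iff.2 fun _ _ => ha _

lemma weightProd_mul_blockVector (ha : ∀ k, a k ≠ 0) {m k i : ℕ}
    (hi : blockIndex n (k + m) = i) (hni : n i ≤ k + m) (hm : m ≤ n i) :
    weightProd a m k * blockVector a L n (k + m) =
      (L i).getD (k + m - n i) 0 / weightProd a (n i - m) (k + m - n i) := by
  have hW : weightProd a (n i) (k + m - n i) =
      weightProd a (n i - m) (k + m - n i) * weightProd a m k := by
    rw [← Nat.sub_add_cancel hm, weightProd_add, Nat.sub_add_cancel hm]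
    congr 2
    omega
  have := weightProd_ne_zero ha m k
  have := weightProd_ne_zero ha (n i - m) (k + m - n i)
  rw [blockVector, hi, hW]
  field_simp

variable (hc : 1 < c) (ha : ∀ k, c ≤ ‖a k‖) (hB : IsAdaptedBlocks c L n)
include hc ha hB

lemma norm_weightProd_mul_blockVector_le {m k i : ℕ} (hi : blockIndex n (k + m) = i + 1)
    (hm : m ≤ n i) : ‖weightProd a m k * blockVector a L n (k + m)‖ ≤ (2 ^ (i + 1))⁻¹ := by
  have hc0 : 0 < c := zero_lt_one.trans hc
  have hni : n i < n (i + 1) := hB.strictMono i.lt_succ_self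
  rw [weightProd_mul_blockVector (ne_zero_of_le_norm hc0 ha) hi
    (hi ▸ blockIndex_le hB.strictMono hB.zero _) (by omega)]
  calc _ ≤ listBound (L (i + 1)) / c ^ (n (i + 1) - m) :=
        norm_div_weightProd_le hc0 ha (norm_getD_le_listBound _ _) _ _
    _ ≤ listBound (L (i + 1)) / c ^ (n (i + 1) - n i) :=
        div_le_div_of_nonneg_left (listBound_nonneg _) (pow_pos hc0 _)
          (pow_le_pow_right₀ hc.le (by omega))
    _ ≤ (2 ^ (i + 1))⁻¹ := by
        rw [div_le_iff₀ (pow_pos hc0 _), inv_mul_eq_div, le_div_iff₀' (by positivity)]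
        exact hB.bound_le i

lemma norm_weightProd_mul_blockVector_sub_le (j k : ℕ) :
    ‖weightProd a (n j) k * blockVector a L n (k + n j) - (L j).getD k 0‖ ≤ (2 ^ (j + 1))⁻¹ := by
  have hn := hB.strictMono
  have hj : j ≤ blockIndex n (k + n j) := (le_blockIndex_iff hn hB.zero).2 (Nat.le_add_left _ _)
  rcases hj.eq_or_lt with hjJ | hjJ
  · rw [weightProd_mul_blockVector (ne_zero_of_le_norm (zero_lt_one.trans hc) ha) hjJ.symm
      (Nat.le_add_left _ _) le_rfl]
    simp
  · obtain ⟨i, hi⟩ := Nat.exists_eq_add_one_of_ne_zero (Nat.ne_zero_of_lt hjJ)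
    have hji : j ≤ i := by omega
    have hlen : (L j).length ≤ k := by
      have := hB.length_lt j
      have := hn.monotone (show j + 1 ≤ i + 1 by omega)
      have := blockIndex_le hn hB.zero (k + n j)
      rw [hi] at this
      omega
    rw [List.getD_eq_default _ _ hlen, sub_zero]
    exact (norm_weightProd_mul_blockVector_le hc ha hB hi (hn.monotone hji)).trans
      (inv_anti₀ (by positivity) (pow_le_pow_right₀ one_le_two (by omega)))

lemma tendsto_weightProd_mul_blockVector (m : ℕ) :
    Tendsto (fun k => weightProd a m k * blockVector a L n (k + m)) atTop (𝓝 0) := by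
  have hJ : Tendsto (fun k => blockIndex n (k + m)) atTop atTop :=
    (tendsto_blockIndex hB.strictMono hB.zero).comp (tendsto_add_atTop_nat m)
  have hpow : Tendsto (fun i : ℕ => ((2 : ℝ) ^ i)⁻¹) atTop (𝓝 0) :=
    tendsto_inv_atTop_zero.comp (tendsto_pow_atTop_atTop_of_one_lt one_lt_two)
  refine squeeze_zero_norm' ?_ (hpow.comp hJ)
  filter_upwards [hJ.eventually_ge_atTop (m + 1)] with k hk
  obtain ⟨i, hi⟩ := Nat.exists_eq_add_one_of_ne_zero (show blockIndex n (k + m) ≠ 0 by omega)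
  rw [Function.comp_apply, hi]
  exact norm_weightProd_mul_blockVector_le hc ha hB hi ((show m ≤ i by omega).trans
    (hB.strictMono.id_le i))

end BlockVector

lemma exists_frequently_dense_lists (E : Type*) [NormedAddCommGroup E]
    [TopologicalSpace.SeparableSpace E] :
    ∃ L : ℕ → List E, ∀ y : ℕ → E, Tendsto y atTop (𝓝 0) → ∀ ε > 0,
      ∃ᶠ j in atTop, ∀ k, ‖(L j).getD k 0 - y k‖ < ε := by
  -- the first coordinate of `Nat.unpair j` is a free label, so each list occurs infinitely often
  refine ⟨fun j => (Denumerable.ofNat (List ℕ) j.unpair.2).map (TopologicalSpace.denseSeq E),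
    fun y hy ε hε => frequently_atTop.2 fun j₀ => ?_⟩
  obtain ⟨N, hN⟩ := eventually_atTop.1 ((tendsto_zero_iff_norm_tendsto_zero.1 hy).eventually
    (gt_mem_nhds hε))
  have happrox (k : ℕ) : ∃ i, ‖TopologicalSpace.denseSeq E i - y k‖ < ε := by
    obtain ⟨i, hi⟩ := Metric.denseRange_iff.1 (TopologicalSpace.denseRange_denseSeq E) (y k) ε hε
    exact ⟨i, by rwa [dist_comm, dist_eq_norm] at hi⟩
  choose u hu using happrox
  refine ⟨Nat.pair j₀ (Encodable.encode ((List.range N).map u)), Nat.left_le_pair _ _, fun k => ?_⟩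
  simp only [Nat.unpair_pair, Denumerable.ofNat_encode, List.map_map]
  by_cases hk : k < N
  · rw [List.getD_eq_getElem _ _ (by simpa using hk)]
    simpa using hu k
  · rw [List.getD_eq_default _ _ (by simpa using hk), zero_sub, norm_neg]
    exact hN k (not_lt.1 hk)

lemma _root_.ZeroAtInftyContinuousMap.denseRange_of_forall_exists_dist_le {α β ι : Type*}
    [TopologicalSpace α] [PseudoMetricSpace β] [Zero β] {g : ι → C₀(α, β)}
    (h : ∀ y : C₀(α, β), ∀ ε > 0, ∃ i, ∀ x, dist (g i x) (y x) ≤ ε) : DenseRange g := by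
  refine Metric.denseRange_iff.2 fun y r hr => ?_
  obtain ⟨i, hi⟩ := h y (r / 2) (half_pos hr)
  refine ⟨i, ?_⟩
  rw [← ZeroAtInftyContinuousMap.dist_toBCF_eq_dist]
  exact ((BoundedContinuousFunction.dist_le (half_pos hr).le).2 fun x => by
    rw [dist_comm]; exact hi x).trans_lt (half_lt_self hr)

lemma _root_.ZeroAtInftyContinuousMap.tendsto_atTop_nat {β : Type*} [TopologicalSpace β] [Zero β]
    (y : C₀(ℕ, β)) : Tendsto y atTop (𝓝 0) := by
  simpa [Filter.cocompact_eq_cofinite, Nat.cofinite_eq_atTop] using y.zero_at_infty'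

theorem exists_dense_orbit_of_le_norm_weight {𝕜 : Type*} [RCLike 𝕜] {a : ℕ → 𝕜} {c : ℝ}
    (hc : 1 < c) (ha : ∀ k, c ≤ ‖a k‖)
    (A : (ℕ → 𝕜) → ℕ → 𝕜) (hA : ∀ x k, A x k = a k * x (k + 1)) :
    ∃ (x : ZeroAtInftyContinuousMap ℕ 𝕜)
      (hx : ∀ n : ℕ, Tendsto (A^[n] ⇑x) atTop (𝓝 0)),
      Dense (Set.range fun n : ℕ => toC0 (A^[n] ⇑x) (hx n)) := by
  obtain ⟨L, hL⟩ := exists_frequently_dense_lists 𝕜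
  obtain ⟨n, hB⟩ := exists_isAdaptedBlocks hc L
  have horbit := iterate_apply_eq_weightProd_mul a hA
  have hx (m : ℕ) : Tendsto (A^[m] (blockVector a L n)) atTop (𝓝 0) := by
    rw [funext (horbit m _)]
    exact tendsto_weightProd_mul_blockVector hc ha hB m
  refine ⟨toC0 (blockVector a L n) (hx 0), hx,
    ZeroAtInftyContinuousMap.denseRange_of_forall_exists_dist_le fun y ε hε => ?_⟩
  have hsmall : ∀ᶠ j in atTop, ((2 : ℝ) ^ (j + 1))⁻¹ < ε / 2 :=
    (tendsto_inv_atTop_zero.comp ((tendsto_pow_atTop_atTop_of_one_lt one_lt_two).comp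
      (tendsto_add_atTop_nat 1))).eventually (gt_mem_nhds (half_pos hε))
  obtain ⟨j, hjy, hj⟩ := ((hL y y.tendsto_atTop_nat _ (half_pos hε)).and_eventually hsmall).exists
  refine ⟨n j, fun k => ?_⟩
  rw [dist_eq_norm]
  change ‖A^[n j] (blockVector a L n) k - y k‖ ≤ ε
  rw [horbit]
  linarith [norm_sub_le_norm_sub_add_norm_sub (weightProd a (n j) k * blockVector a L n (k + n j))
    ((L j).getD k 0) (y k), norm_weightProd_mul_blockVector_sub_le hc ha hB j k, hjy k]

end WeightedShift

/-- The weighted backward shift `A` (0-based: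
`A x k = w ^ (k+1) * x (k+1)`) with `|w| > 1`, with maximal domain
`D(A) = {x ∈ c₀ | Ax ∈ c₀}`, is hypercyclic on `c₀` (sup norm): there exists
`x ∈ C^∞(A) = ⋂ₙ D(Aⁿ)` whose orbit `{Aⁿx : n ∈ ℤ₊}` is dense in `c₀`. -/
theorem rolewicz_c0_hypercyclic {𝕜 : Type*} [RCLike 𝕜]
    (w : 𝕜) (hw : 1 < ‖w‖)
    (A : (ℕ → 𝕜) → ℕ → 𝕜) (hA : ∀ x k, A x k = w ^ (k + 1) * x (k + 1)) :
    ∃ (x : ZeroAtInftyContinuousMap ℕ 𝕜)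
      (hx : ∀ n : ℕ, Filter.Tendsto (A^[n] ⇑x) Filter.atTop (nhds 0)),
      Dense (Set.range fun n : ℕ => toC0 (A^[n] ⇑x) (hx n)) :=
  WeightedShift.exists_dense_orbit_of_le_norm_weight hw
    (fun k => by simpa only [norm_pow] using le_self_pow₀ hw.le k.succ_ne_zero) A hA
end

section
/- Let w be a scalar with |w| > 1, 1 ≤ p < ∞, N ∈ ℕ, and x₁,…,x_N arbitrary scalars. Define the sequence x by x_{mN+j} = w^{-[(mN+j−1)+(mN+j−2)+⋯+j]} x_j for m ∈ ℤ₊ and j = 1,…,N (so the first block is x₁,…,x_N and each subsequent block repeats it with the indicated weights). Then x ∈ ℓ^p, x ∈ D(A^N), and A^N x = x; that is, x is a periodic point of A. -/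
/-! `A^N` moves each entry back by one block and multiplies it by `w ^ ((k+1) + ⋯ + (k+N))`,
which is exactly the ratio of the weights of consecutive blocks; hence `A^N x = x`.
In block `m` the exponent of `w⁻¹` is at least `m N`, so `‖x k‖` decays geometrically and
`x ∈ ℓ¹ ⊆ ℓ^p`. -/

open scoped ENNReal

open Finset

theorem Nat.exists_eq_mul_add_fin {N : ℕ} (hN : 0 < N) (k : ℕ) :
    ∃ (m : ℕ) (j : Fin N), m * N + j = k :=
  ⟨k / N, ⟨k % N, Nat.mod_lt k hN⟩, Nat.div_add_mod' k N⟩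

theorem iterate_weightedShift_apply {R : Type*} [Monoid R] (w : R)
    (A : (ℕ → R) → ℕ → R) (hA : ∀ x k, A x k = w ^ (k + 1) * x (k + 1))
    (n : ℕ) (y : ℕ → R) (k : ℕ) :
    A^[n] y k = w ^ (∑ t ∈ range n, (k + 1 + t)) * y (k + n) := by
  induction n generalizing y with
  | zero => simp
  | succ n ih =>
    rw [Function.iterate_succ_apply, ih, hA, sum_range_succ, pow_add _ (∑ t ∈ range n, _),
      mul_assoc, add_right_comm k 1 n, add_assoc k n 1]

section Blockwise

variable {K : Type*} {N : ℕ} {w : K} {c : Fin N → K} {x : ℕ → K}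

theorem iterate_weightedShift_eq_self_of_blockwise [Field K] (hw : w ≠ 0)
    (A : (ℕ → K) → ℕ → K) (hA : ∀ x k, A x k = w ^ (k + 1) * x (k + 1)) (hN : 0 < N)
    (hx : ∀ (m : ℕ) (j : Fin N),
      x (m * N + ↑j) = w⁻¹ ^ (∑ t ∈ range (m * N), (↑j + 1 + t)) * c j) :
    A^[N] x = x := by
  funext k
  obtain ⟨m, j, rfl⟩ := Nat.exists_eq_mul_add_fin hN k
  have hblock : (m + 1) * N + j = m * N + j + N := by ring
  have hshift : ∑ t ∈ range N, (↑j + 1 + (m * N + t)) = ∑ t ∈ range N, (m * N + ↑j + 1 + t) :=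
    sum_congr rfl fun t _ => by ring
  rw [iterate_weightedShift_apply w A hA, ← hblock, hx, hx, add_one_mul, sum_range_add, hshift,
    pow_add, inv_pow, inv_pow]
  field_simp

theorem norm_le_geometric_of_blockwise [NormedDivisionRing K] (hw : 1 < ‖w‖) (hN : 0 < N)
    (hx : ∀ (m : ℕ) (j : Fin N),
      x (m * N + ↑j) = w⁻¹ ^ (∑ t ∈ range (m * N), (↑j + 1 + t)) * c j) (k : ℕ) :
    ‖x k‖ ≤ (‖w‖ ^ N * ∑ j, ‖c j‖) * ‖w‖⁻¹ ^ k := by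
  obtain ⟨m, j, rfl⟩ := Nat.exists_eq_mul_add_fin hN k
  have hexp : m * N ≤ ∑ t ∈ range (m * N), (↑j + 1 + t) := by
    simpa using sum_le_sum fun t (_ : t ∈ range (m * N)) => (by omega : 1 ≤ ↑j + 1 + t)
  have hr : ‖w‖⁻¹ ≤ 1 := inv_le_one_of_one_le₀ hw.le
  rw [hx, norm_mul, norm_pow, norm_inv]
  calc ‖w‖⁻¹ ^ (∑ t ∈ range (m * N), (↑j + 1 + t)) * ‖c j‖
      ≤ ‖w‖⁻¹ ^ (m * N) * ‖c j‖ :=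
        mul_le_mul_of_nonneg_right (pow_le_pow_of_le_one (by positivity) hr hexp) (norm_nonneg _)
    _ = ‖w‖ ^ (j : ℕ) * ‖c j‖ * ‖w‖⁻¹ ^ (m * N + j) := by
      rw [pow_add, inv_pow ‖w‖ j]
      field_simp
    _ ≤ (‖w‖ ^ N * ∑ j, ‖c j‖) * ‖w‖⁻¹ ^ (m * N + j) := by
      gcongr
      · exact hw.le
      · exact j.is_lt.le
      · exact single_le_sum (fun i _ => norm_nonneg (c i)) (mem_univ j)

end Blockwise

theorem memℓp_of_norm_le_geometric {E : Type*} [NormedAddCommGroup E] {f : ℕ → E}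
    {C r : ℝ} (hr₀ : 0 ≤ r) (hr₁ : r < 1) (hf : ∀ k, ‖f k‖ ≤ C * r ^ k)
    {p : ℝ≥0∞} (hp : 1 ≤ p) : Memℓp f p := by
  refine Memℓp.of_exponent_ge (memℓp_gen ?_) hp
  simp only [ENNReal.toReal_one, Real.rpow_one]
  exact ((summable_geometric_of_lt_one hr₀ hr₁).mul_left C).of_nonneg_of_le
    (fun k => norm_nonneg _) hf

/-- Sequences are indexed from `0`: `x (m * N + j)` with `j : Fin N` is the paper's
`x_{mN+j+1}`, and `A x k = w ^ (k + 1) * x (k + 1)` is the paper's `(Ax)_{k+1}`. -/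
theorem rolewicz_lp_periodic_point_general {𝕜 : Type*} [RCLike 𝕜]
    (w : 𝕜) (hw : 1 < ‖w‖) (p : ℝ≥0∞) (hp : 1 ≤ p)
    (A : (ℕ → 𝕜) → ℕ → 𝕜) (hA : ∀ x k, A x k = w ^ (k + 1) * x (k + 1))
    (N : ℕ) (hN : 0 < N) (c : Fin N → 𝕜)
    (x : ℕ → 𝕜)
    (hx : ∀ (m : ℕ) (j : Fin N),
      x (m * N + ↑j) = w⁻¹ ^ (∑ t ∈ Finset.range (m * N), (↑j + 1 + t)) * c j) :
    Memℓp x p ∧ Memℓp (A^[N] x) p ∧ A^[N] x = x := by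
  have hw₀ : w ≠ 0 := norm_pos_iff.mp (one_pos.trans hw)
  have hperiodic := iterate_weightedShift_eq_self_of_blockwise hw₀ A hA hN hx
  have hmem : Memℓp x p :=
    memℓp_of_norm_le_geometric (by positivity) (inv_lt_one_of_one_lt₀ hw)
      (norm_le_geometric_of_blockwise hw hN hx) hp
  exact ⟨hmem, by rwa [hperiodic], hperiodic⟩

/-- Let `|w| > 1`, `1 ≤ p < ∞`, `N ≥ 1`, and let `c 0, …, c (N-1)` be
arbitrary scalars. The sequence `x` defined blockwise (0-based) by
`x (m*N + j) = w^{-[(mN+j-1)+(mN+j-2)+⋯+(j+1)]} * c j` for `m ∈ ℤ₊`, `j < N`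
(the paper's `x_{mN+j} = w^{-[(mN+j-1)+⋯+j]} x_j`, 1-based) belongs to `ℓ^p`,
lies in `D(A^N)`, and satisfies `A^N x = x`, i.e. `x` is a periodic point of the
weighted backward shift `A` (0-based: `A x k = w ^ (k+1) * x (k+1)`). -/
theorem rolewicz_lp_periodic_point {𝕜 : Type*} [RCLike 𝕜]
    (w : 𝕜) (hw : 1 < ‖w‖) (p : ℝ≥0∞) (hp : 1 ≤ p) (hp' : p ≠ ∞)
    (A : (ℕ → 𝕜) → ℕ → 𝕜) (hA : ∀ x k, A x k = w ^ (k + 1) * x (k + 1))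
    (N : ℕ) (hN : 0 < N) (c : Fin N → 𝕜)
    (x : ℕ → 𝕜)
    (hx : ∀ (m : ℕ) (j : Fin N),
      x (m * N + ↑j) = w⁻¹ ^ (∑ t ∈ Finset.range (m * N), (↑j + 1 + t)) * c j) :
    Memℓp x p ∧ Memℓp (A^[N] x) p ∧ A^[N] x = x :=
  rolewicz_lp_periodic_point_general w hw p hp A hA N hN c x hx
end

section
/- Let w be a scalar with |w| > 1, 1 ≤ p < ∞, let y ∈ ℓ^p be an eventually zero sequence with y_k = 0 for k > n, and let N ≥ n. Define the periodic point x by the block construction x_{mN+j} = w^{-[(mN+j−1)+⋯+j]} y_j for j = 1,…,n and x_{mN+j} = 0 for j = n+1,…,N (m ∈ ℤ₊), so that A^N x = x. Then ‖y − x‖_p ≤ ‖y‖_p · |w|^{−N}/(1 − |w|^{−N}); in particular, ‖y − x‖_p → 0 as N → ∞. -/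
open scoped ENNReal
open Finset

/-!
The block construction gives the exact recursion `x (k + N) = w⁻¹ ^ ((k + 1) + ⋯ + (k + N)) * x k`.
It makes `x` a fixed point of `A^N`, and it yields `‖x (k + N)‖ ≤ s * ‖x k‖` with
`s = ‖w‖⁻¹ ^ N < 1`, which is enough for `x ∈ ℓ^p`. Since `x = y` on the first block and
`y = 0` beyond it, `y - x` vanishes on the first block and its shift by `N` is dominated
coordinatewise by `s * x`. Hence `‖y - x‖ ≤ s * ‖x‖ ≤ s * (‖y‖ + ‖y - x‖)`, and solving for
`‖y - x‖` gives the bound.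
-/

theorem summable_of_nonneg_of_shift_le_mul {f : ℕ → ℝ} (hf : ∀ k, 0 ≤ f k) {N : ℕ} {t : ℝ}
    (ht0 : 0 ≤ t) (ht1 : t < 1) (h : ∀ k, f (k + N) ≤ t * f k) : Summable f := by
  have hmono : ∀ M, ∑ k ∈ range M, f k ≤ ∑ k ∈ range (M + N), f k := fun M =>
    sum_le_sum_of_subset_of_nonneg (range_mono (by omega)) fun k _ _ => hf k
  have hbound : ∀ M, ∑ k ∈ range (M + N), f k ≤ (∑ k ∈ range N, f k) / (1 - t) := by
    intro M
    have hsplit : ∑ k ∈ range (M + N), f k ≤ ∑ k ∈ range N, f k + t * ∑ k ∈ range M, f k := by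
      rw [add_comm M N, sum_range_add, mul_sum]
      gcongr with k
      rw [add_comm]
      exact h k
    rw [le_div_iff₀ (by linarith)]
    nlinarith [hmono M]
  exact summable_of_sum_range_le hf fun M => (hmono M).trans (hbound M)

section lp

variable {E : Type*} [NormedAddCommGroup E] {p : ℝ≥0∞}

theorem memℓp_of_norm_shift_le_mul {x : ℕ → E} (hp : 0 < p.toReal) {N : ℕ} {s : ℝ}
    (hs0 : 0 ≤ s) (hs1 : s < 1) (hx : ∀ k, ‖x (k + N)‖ ≤ s * ‖x k‖) : Memℓp x p := by
  refine memℓp_gen <| summable_of_nonneg_of_shift_le_mul (N := N) (fun k => by positivity)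
    (Real.rpow_nonneg hs0 _) (Real.rpow_lt_one hs0 hs1 hp) fun k => ?_
  rw [← Real.mul_rpow hs0 (norm_nonneg _)]
  exact Real.rpow_le_rpow (norm_nonneg _) (hx k) hp.le

theorem lp.norm_le_mul_of_norm_shift_le (hp : 0 < p.toReal) {u v : lp (fun _ : ℕ => E) p}
    {N : ℕ} {s : ℝ} (hs : 0 ≤ s) (hu : ∀ k < N, u k = 0) (h : ∀ k, ‖u (k + N)‖ ≤ s * ‖v k‖) :
    ‖u‖ ≤ s * ‖v‖ := by
  have hu_sum := (lp.memℓp u).summable hp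
  have hpow : ∀ k, ‖u (k + N)‖ ^ p.toReal ≤ s ^ p.toReal * ‖v k‖ ^ p.toReal := fun k => by
    rw [← Real.mul_rpow hs (norm_nonneg _)]
    exact Real.rpow_le_rpow (norm_nonneg _) (h k) hp.le
  have hu_tail : ∑' k, ‖u k‖ ^ p.toReal = ∑' k, ‖u (k + N)‖ ^ p.toReal := by
    rw [← hu_sum.sum_add_tsum_nat_add N, sum_eq_zero fun k hk => ?_, zero_add]
    simp [hu k (mem_range.mp hk), Real.zero_rpow hp.ne']
  refine (Real.rpow_le_rpow_iff (lp.norm_nonneg' u)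
    (mul_nonneg hs (lp.norm_nonneg' v)) hp).mp ?_
  rw [Real.mul_rpow hs (lp.norm_nonneg' v), lp.norm_rpow_eq_tsum hp, lp.norm_rpow_eq_tsum hp,
    hu_tail, ← tsum_mul_left]
  exact ((summable_nat_add_iff N).2 hu_sum).tsum_le_tsum hpow
    (((lp.memℓp v).summable hp).mul_left _)

theorem exists_memℓp_norm_sub_le_of_norm_shift_le_mul [Fact (1 ≤ p)] (hp : p ≠ ∞) {x : ℕ → E}
    (y : lp (fun _ : ℕ => E) p) {N : ℕ} {s : ℝ} (hs0 : 0 ≤ s) (hs1 : s < 1)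
    (hxy : ∀ k < N, x k = y k) (hy : ∀ k, N ≤ k → y k = 0)
    (hx : ∀ k, ‖x (k + N)‖ ≤ s * ‖x k‖) :
    ∃ hxp : Memℓp x p, ‖y - ⟨x, hxp⟩‖ ≤ ‖y‖ * (s / (1 - s)) := by
  have hp0 : 0 < p.toReal := ENNReal.toReal_pos (one_pos.trans_le Fact.out).ne' hp
  have hxp := memℓp_of_norm_shift_le_mul hp0 hs0 hs1 hx
  refine ⟨hxp, ?_⟩
  set X : lp (fun _ : ℕ => E) p := ⟨x, hxp⟩
  have hvanish : ∀ k < N, (y - X) k = 0 := fun k hk => by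
    change y k - x k = 0
    rw [hxy k hk, sub_self]
  have htail : ∀ k, ‖(y - X) (k + N)‖ ≤ s * ‖X k‖ := fun k => by
    change ‖y (k + N) - x (k + N)‖ ≤ _
    rw [hy (k + N) (by omega), zero_sub, norm_neg]
    exact hx k
  have hshift := lp.norm_le_mul_of_norm_shift_le hp0 hs0 hvanish htail
  have htri : ‖X‖ ≤ ‖y‖ + ‖y - X‖ := by
    simpa [norm_sub_rev] using norm_le_norm_add_norm_sub' X y
  rw [← mul_div_assoc, le_div_iff₀ (by linarith)]
  nlinarith [norm_nonneg y]

end lp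

section blocks

variable {R : Type*} [Monoid R]

theorem add_period_eq_pow_mul_of_blocks {N : ℕ} (hN : 0 < N) {a : R} {x y : ℕ → R}
    (hx : ∀ (m : ℕ) (j : Fin N), x (m * N + j) = a ^ (∑ t ∈ range (m * N), (j + 1 + t)) * y j)
    (k : ℕ) : x (k + N) = a ^ (∑ t ∈ range N, (k + 1 + t)) * x k := by
  obtain ⟨m, j, rfl⟩ : ∃ m, ∃ j : Fin N, k = m * N + j :=
    ⟨k / N, ⟨k % N, Nat.mod_lt k hN⟩, (Nat.div_add_mod' k N).symm⟩
  rw [show m * N + j + N = (m + 1) * N + j by ring, hx, hx, ← mul_assoc, ← pow_add,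
    add_mul, one_mul, sum_range_add, add_comm]
  congr 3
  exact sum_congr rfl fun t _ => by ring

theorem iterate_apply_of_weighted_shift {w : R} {A : (ℕ → R) → ℕ → R}
    (hA : ∀ x k, A x k = w ^ (k + 1) * x (k + 1)) (x : ℕ → R) (i k : ℕ) :
    A^[i] x k = w ^ (∑ t ∈ range i, (k + 1 + t)) * x (k + i) := by
  induction i generalizing k with
  | zero => simp
  | succ i ih =>
    rw [Function.iterate_succ_apply', hA, ih, ← mul_assoc, ← pow_add, sum_range_succ',
      add_zero, add_comm (k + 1), show k + (i + 1) = k + 1 + i by ring]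
    congr 3
    exact sum_congr rfl fun t _ => by ring

end blocks

/-- Let `|w| > 1`, `1 ≤ p < ∞`, let `y ∈ ℓ^p` vanish beyond its first
`n` entries (0-based: `y k = 0` for `k ≥ n`), and let `N ≥ n`, `N ≥ 1`. Define the
periodic point `x` by the block construction (0-based)
`x (m*N + j) = w^{-[(mN+j-1)+⋯+(j+1)]} * y j` for `m ∈ ℤ₊`, `j < N`
(so that `A^N x = x`, where `A x k = w ^ (k+1) * x (k+1)` is the weighted backward
shift). Then `‖y - x‖_p ≤ ‖y‖_p * |w|^{-N} / (1 - |w|^{-N})`. -/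
theorem rolewicz_lp_periodic_approx {𝕜 : Type*} [RCLike 𝕜]
    (w : 𝕜) (hw : 1 < ‖w‖) (p : ℝ≥0∞) [Fact (1 ≤ p)] (hp' : p ≠ ∞)
    (A : (ℕ → 𝕜) → ℕ → 𝕜) (hA : ∀ x k, A x k = w ^ (k + 1) * x (k + 1))
    (n : ℕ) (y : lp (fun _ : ℕ => 𝕜) p) (hy : ∀ k, n ≤ k → (y : ℕ → 𝕜) k = 0)
    (N : ℕ) (hN : 0 < N) (hnN : n ≤ N)
    (x : ℕ → 𝕜)
    (hx : ∀ (m : ℕ) (j : Fin N),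
      x (m * N + ↑j) = w⁻¹ ^ (∑ t ∈ Finset.range (m * N), (↑j + 1 + t)) * y ↑j) :
    ∃ hxp : Memℓp x p,
      A^[N] x = x ∧
      ‖y - (⟨x, hxp⟩ : lp (fun _ : ℕ => 𝕜) p)‖ ≤
        ‖y‖ * (‖w‖⁻¹ ^ N / (1 - ‖w‖⁻¹ ^ N)) := by
  have hperiod := add_period_eq_pow_mul_of_blocks hN hx
  have hxy : ∀ k < N, x k = y k := fun k hk => by simpa using hx 0 ⟨k, hk⟩
  have hcontract : ∀ k, ‖x (k + N)‖ ≤ ‖w‖⁻¹ ^ N * ‖x k‖ := fun k => by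
    have hexp : N ≤ ∑ t ∈ range N, (k + 1 + t) := by
      simpa using card_nsmul_le_sum (range N) (fun t => k + 1 + t) 1 fun t _ => by omega
    rw [hperiod, norm_mul, norm_pow, norm_inv]
    gcongr ?_ * _
    exact pow_le_pow_of_le_one (by positivity) (inv_le_one_of_one_le₀ hw.le) hexp
  obtain ⟨hxp, hbound⟩ := exists_memℓp_norm_sub_le_of_norm_shift_le_mul hp' y (by positivity)
    (pow_lt_one₀ (by positivity) (inv_lt_one_of_one_lt₀ hw) hN.ne') hxy
    (fun k hk => hy k (hnN.trans hk)) hcontract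
  have hw0 : w ≠ 0 := norm_pos_iff.mp (one_pos.trans hw)
  refine ⟨hxp, funext fun k => ?_, hbound⟩
  rw [iterate_apply_of_weighted_shift hA, hperiod, inv_pow,
    mul_inv_cancel_left₀ (pow_ne_zero _ hw0)]
end

section
/- Let w be a scalar (real or complex) with |w| > 1 and 1 ≤ p < ∞. The set of periodic points of the weighted backward shift A, namely {x ∈ C^∞(A) : ∃ N ∈ ℕ, A^N x = x}, is dense in ℓ^p. -/
/-!
Write `W k = w ^ (1 + 2 + ⋯ + k)`. Dividing by `W` turns the weighted backward shift into the
plain backward shift, so `x = z / W` is an `N`-periodic point of `A` whenever `z` is `N`-periodic,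
and all iterates `A^n x` lie in `ℓ^p` because `‖W k‖ ≥ ‖w‖ ^ k` makes them decay geometrically.
Taking for `z` the `N`-periodic extension of `W • y` restricted to `[0, N)`, the point `x` agrees
with `y` below `N` and satisfies `‖x k‖ ≤ ‖y‖ ‖w‖⁻¹ ^ k` from `N` on, so `x → y` as `N → ∞`.
-/

open scoped ENNReal
open Filter Finset Topology

def triangular (k : ℕ) : ℕ := ∑ j ∈ range k, (j + 1)

lemma triangular_succ (k : ℕ) : triangular (k + 1) = triangular k + (k + 1) :=
  sum_range_succ _ _

lemma triangular_mono : Monotone triangular := fun _ _ h =>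
  sum_le_sum_of_subset (range_subset_range.2 h)

lemma triangular_add_le {a b : ℕ} (h : a < b) : triangular a + b ≤ triangular b := by
  obtain ⟨c, rfl⟩ := Nat.exists_eq_add_of_lt h
  have := triangular_mono (Nat.le_add_right a c)
  rw [triangular_succ]
  omega

lemma le_triangular (k : ℕ) : k ≤ triangular k := by
  rcases k.eq_zero_or_pos with rfl | hk
  · rfl
  · simpa [triangular] using triangular_add_le hk

lemma memℓp_geometric {r : ℝ} (hr₀ : 0 ≤ r) (hr₁ : r < 1) {p : ℝ≥0∞} (hp : p ≠ 0) :
    Memℓp (fun k : ℕ => r ^ k) p := by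
  rcases p.trichotomy with rfl | rfl | hp'
  · exact absurd rfl hp
  · refine memℓp_infty ⟨1, ?_⟩
    rintro _ ⟨k, rfl⟩
    simpa [abs_of_nonneg hr₀] using pow_le_one₀ hr₀ hr₁.le
  · refine memℓp_gen ?_
    have hq : r ^ p.toReal < 1 := Real.rpow_lt_one hr₀ hr₁ hp'
    convert summable_geometric_of_lt_one (Real.rpow_nonneg hr₀ _) hq using 2 with k
    rw [Real.norm_of_nonneg (by positivity), ← Real.rpow_natCast, ← Real.rpow_natCast,
      ← Real.rpow_mul hr₀, ← Real.rpow_mul hr₀, mul_comm]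

namespace lp

variable {E : ℕ → Type*} [∀ i, NormedAddCommGroup (E i)] {p : ℝ≥0∞}

lemma tendsto_norm_sub_sum_single [Fact (1 ≤ p)] (hp : p ≠ ∞) (f : lp E p) :
    Tendsto (fun N => ‖f - ∑ i ∈ range N, lp.single p i (f i)‖) atTop (𝓝 0) := by
  have := (lp.hasSum_single hp f).tendsto_sum_nat
  simpa only [norm_sub_rev f] using tendsto_iff_norm_sub_tendsto_zero.1 this

lemma norm_le_norm_sub_sum_single {F : ℕ → Type*} [∀ i, NormedAddCommGroup (F i)] (hp : p ≠ 0)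
    {f : lp E p} {g : lp F p} {N : ℕ} (hf : ∀ i < N, f i = 0)
    (hfg : ∀ i, N ≤ i → ‖f i‖ ≤ ‖g i‖) :
    ‖f‖ ≤ ‖g - ∑ i ∈ range N, lp.single p i (g i)‖ := by
  refine lp.norm_mono hp fun i => ?_
  simp only [coeFn_sub, coeFn_sum, lp.coeFn_single, Pi.sub_apply, Finset.sum_apply,
    Finset.sum_pi_single, mem_range]
  split_ifs with hi
  · simp [hf i hi]
  · simpa using hfg i (not_lt.1 hi)

end lp

section WeightedShift

variable {𝕜 : Type*} [RCLike 𝕜] {w : 𝕜}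

def divWeight (w : 𝕜) (z : ℕ → 𝕜) (k : ℕ) : 𝕜 := (w ^ triangular k)⁻¹ * z k

lemma iterate_divWeight {A : (ℕ → 𝕜) → ℕ → 𝕜} (hw : w ≠ 0)
    (hA : ∀ x k, A x k = w ^ (k + 1) * x (k + 1)) (z : ℕ → 𝕜) (n : ℕ) :
    A^[n] (divWeight w z) = divWeight w (fun k => z (k + n)) := by
  induction n with
  | zero => rfl
  | succ n ih =>
    ext k
    rw [Function.iterate_succ_apply', ih, hA]
    simp only [divWeight, triangular_succ, pow_add, add_right_comm k 1 n]
    field_simp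
    rw [add_assoc]

lemma norm_divWeight_le (hw : 1 ≤ ‖w‖) (z : ℕ → 𝕜) (k : ℕ) :
    ‖divWeight w z k‖ ≤ ‖w‖⁻¹ ^ k * ‖z k‖ := by
  rw [divWeight, norm_mul, norm_inv, norm_pow, inv_pow]
  gcongr
  exact le_triangular k

lemma memℓp_divWeight (hw : 1 < ‖w‖) {p : ℝ≥0∞} (hp : p ≠ 0) {z : ℕ → 𝕜} {C : ℝ}
    (hz : ∀ k, ‖z k‖ ≤ C) : Memℓp (divWeight w z) p := by
  refine ((memℓp_geometric (by positivity) (inv_lt_one_of_one_lt₀ hw) hp).const_mul C).mono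
    fun k => ?_
  calc ‖divWeight w z k‖ ≤ ‖w‖⁻¹ ^ k * ‖z k‖ := norm_divWeight_le hw.le z k
    _ ≤ C * ‖w‖⁻¹ ^ k := by rw [mul_comm]; gcongr; exact hz k

def periodicPoint (w : 𝕜) (N : ℕ) (y : ℕ → 𝕜) : ℕ → 𝕜 :=
  divWeight w fun k => w ^ triangular (k % N) * y (k % N)

lemma periodicPoint_of_lt (hw : w ≠ 0) (N : ℕ) (y : ℕ → 𝕜) {k : ℕ} (hk : k < N) :
    periodicPoint w N y k = y k := by
  simp [periodicPoint, divWeight, Nat.mod_eq_of_lt hk, hw]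

lemma norm_periodicPoint_le (hw : 1 ≤ ‖w‖) {N : ℕ} (hN : 0 < N) {y : ℕ → 𝕜} {C : ℝ}
    (hy : ∀ k, ‖y k‖ ≤ C) {k : ℕ} (hk : N ≤ k) :
    ‖periodicPoint w N y k‖ ≤ C * ‖w‖⁻¹ ^ k := by
  have hmod : triangular (k % N) + k ≤ triangular k :=
    triangular_add_le ((Nat.mod_lt k hN).trans_le hk)
  have hratio : ‖w‖ ^ triangular (k % N) / ‖w‖ ^ triangular k ≤ ‖w‖⁻¹ ^ k := by
    have hw₀ : 0 < ‖w‖ := one_pos.trans_le hw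
    rw [div_le_iff₀ (by positivity), inv_pow, inv_mul_eq_div, le_div_iff₀ (by positivity),
      ← pow_add]
    exact pow_le_pow_right₀ hw hmod
  calc ‖periodicPoint w N y k‖
      = ‖w‖ ^ triangular (k % N) / ‖w‖ ^ triangular k * ‖y (k % N)‖ := by
        rw [periodicPoint, divWeight, norm_mul, norm_mul, norm_inv, norm_pow, norm_pow]
        ring
    _ ≤ ‖w‖⁻¹ ^ k * C := by gcongr; exact hy _
    _ = C * ‖w‖⁻¹ ^ k := mul_comm _ _

variable {A : (ℕ → 𝕜) → ℕ → 𝕜}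

lemma iterate_periodicPoint (hw : w ≠ 0) (hA : ∀ x k, A x k = w ^ (k + 1) * x (k + 1))
    (N : ℕ) (y : ℕ → 𝕜) : A^[N] (periodicPoint w N y) = periodicPoint w N y := by
  simp only [periodicPoint, iterate_divWeight hw hA, Nat.add_mod_right]

lemma memℓp_iterate_periodicPoint (hw : 1 < ‖w‖) (hA : ∀ x k, A x k = w ^ (k + 1) * x (k + 1))
    {p : ℝ≥0∞} (hp : p ≠ 0) {N : ℕ} (hN : 0 < N) {y : ℕ → 𝕜} {C : ℝ} (hy : ∀ k, ‖y k‖ ≤ C)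
    (n : ℕ) : Memℓp (A^[n] (periodicPoint w N y)) p := by
  rw [periodicPoint, iterate_divWeight (norm_pos_iff.1 (one_pos.trans hw)) hA]
  refine memℓp_divWeight hw hp (C := ‖w‖ ^ triangular N * C) fun k => ?_
  rw [norm_mul, norm_pow]
  gcongr
  · exact hw.le
  · exact triangular_mono (Nat.mod_lt _ hN).le
  · exact hy _

end WeightedShift

/-- For the weighted backward shift `A` (0-based:
`A x k = w ^ (k+1) * x (k+1)`) with `|w| > 1` on `ℓ^p` (`1 ≤ p < ∞`), the set of
periodic points `{x ∈ C^∞(A) | ∃ N ≥ 1, A^N x = x}` is dense in `ℓ^p`. -/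
theorem rolewicz_lp_periodic_points_dense {𝕜 : Type*} [RCLike 𝕜]
    (w : 𝕜) (hw : 1 < ‖w‖) (p : ℝ≥0∞) [Fact (1 ≤ p)] (hp' : p ≠ ∞)
    (A : (ℕ → 𝕜) → ℕ → 𝕜) (hA : ∀ x k, A x k = w ^ (k + 1) * x (k + 1)) :
    Dense {x : lp (fun _ : ℕ => 𝕜) p |
      (∀ n : ℕ, Memℓp (A^[n] ⇑x) p) ∧ ∃ N : ℕ, 0 < N ∧ A^[N] ⇑x = ⇑x} := by
  have hp₀ : p ≠ 0 := (zero_lt_one.trans_le Fact.out).ne'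
  have hw₀ : w ≠ 0 := norm_pos_iff.1 (one_pos.trans hw)
  refine Metric.dense_iff.2 fun y ε hε => ?_
  have hy : ∀ k, ‖y k‖ ≤ ‖y‖ := lp.norm_apply_le_norm hp₀ y
  let g : lp (fun _ : ℕ => ℝ) p := ⟨fun k => ‖y‖ * ‖w‖⁻¹ ^ k + ‖y k‖,
    ((memℓp_geometric (by positivity) (inv_lt_one_of_one_lt₀ hw) hp₀).const_mul _).add
      (lp.memℓp y).norm⟩
  obtain ⟨N, hNε, hN⟩ := (((lp.tendsto_norm_sub_sum_single hp' g).eventually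
    (gt_mem_nhds hε)).and (eventually_gt_atTop 0)).exists
  let x : lp (fun _ : ℕ => 𝕜) p :=
    ⟨periodicPoint w N y, memℓp_iterate_periodicPoint hw hA hp₀ hN hy 0⟩
  refine ⟨x, ?_, memℓp_iterate_periodicPoint hw hA hp₀ hN hy, N, hN,
    iterate_periodicPoint hw₀ hA N y⟩
  rw [Metric.mem_ball, dist_eq_norm]
  refine (lp.norm_le_norm_sub_sum_single hp₀ (g := g) (fun k hk => ?_) fun k hk => ?_).trans_lt hNε
  · exact sub_eq_zero.2 (periodicPoint_of_lt hw₀ N y hk)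
  · calc ‖(x - y) k‖ ≤ ‖x k‖ + ‖y k‖ := norm_sub_le _ _
      _ ≤ ‖y‖ * ‖w‖⁻¹ ^ k + ‖y k‖ := by gcongr; exact norm_periodicPoint_le hw.le hN hy hk
      _ = ‖g k‖ := (Real.norm_of_nonneg (by positivity)).symm
end

section
/- Let w be a scalar (real or complex) with |w| > 1. The set of periodic points of the weighted backward shift A in c₀, namely {x ∈ C^∞(A) : ∃ N ∈ ℕ, A^N x = x}, is dense in c₀. -/
/-!
Write `W k = w¹ w² ⋯ wᵏ`. Multiplication by `W⁻¹` conjugates the unweighted backward shift `S`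
to `A`: `Aⁿ (W⁻¹ z) = W⁻¹ (Sⁿ z)`. Hence `W⁻¹ z` is a periodic point of `A` whenever `z` is
periodic, and it lies in `C^∞(A)` because a periodic `z` is bounded while `W⁻¹` decays.
To approximate `f ∈ c₀` whose tail beyond `M` is small, take `z` of period `N ≥ M` equal to
`W f` on `[0, M)` and to `0` on `[M, N)`. Then `W⁻¹ z` agrees with `f` below `M`, vanishes on
`[M, N)`, and beyond `N` is bounded by `|W⁻¹|` times a constant that does not depend on `N`.
-/

open Filter Topology Finset ZeroAtInfty

namespace ZeroAtInftyContinuousMap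

lemma dist_le {α β : Type*} [TopologicalSpace α] [PseudoMetricSpace β] [Zero β]
    {f g : C₀(α, β)} {C : ℝ} (hC : 0 ≤ C) : dist f g ≤ C ↔ ∀ x, dist (f x) (g x) ≤ C := by
  rw [← dist_toBCF_eq_dist, BoundedContinuousFunction.dist_le hC]
  rfl

variable {β : Type*} [TopologicalSpace β] [Zero β]

def ofTendsto (x : ℕ → β) (hx : Tendsto x atTop (𝓝 0)) : C₀(ℕ, β) :=
  ⟨⟨x, continuous_of_discreteTopology⟩, by rwa [cocompact_eq_atTop]⟩

lemma tendsto_atTop (f : C₀(ℕ, β)) : Tendsto f atTop (𝓝 0) := by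
  simpa [cocompact_eq_atTop] using f.zero_at_infty'

end ZeroAtInftyContinuousMap

lemma Nat.choose_two_succ_succ (k : ℕ) : (k + 2).choose 2 = (k + 1).choose 2 + (k + 1) := by
  rw [Nat.choose_succ_succ', Nat.choose_one_right, add_comm]

lemma Nat.le_choose_two_succ : ∀ k : ℕ, k ≤ (k + 1).choose 2
  | 0 => le_rfl
  | k + 1 => by rw [Nat.choose_two_succ_succ]; omega

namespace WeightedShift

variable {𝕜 : Type*}

section DivisionRing

variable [DivisionRing 𝕜] {w : 𝕜} {f : ℕ → 𝕜} {M N k : ℕ}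

/-- `(w¹ w² ⋯ wᵏ)⁻¹`, as `1 + 2 + ⋯ + k = (k + 1).choose 2`. -/
def invWeight (w : 𝕜) (k : ℕ) : 𝕜 := w⁻¹ ^ (k + 1).choose 2

lemma invWeight_ne_zero (hw : w ≠ 0) (k : ℕ) : invWeight w k ≠ 0 :=
  pow_ne_zero _ (inv_ne_zero hw)

def periodicProfile (w : 𝕜) (f : ℕ → 𝕜) (M N k : ℕ) : 𝕜 :=
  if k % N < M then (invWeight w (k % N))⁻¹ * f (k % N) else 0

lemma periodicProfile_periodic (w : 𝕜) (f : ℕ → 𝕜) (M N : ℕ) :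
    Function.Periodic (periodicProfile w f M N) N := fun k ↦ by
  simp only [periodicProfile, Nat.add_mod_right]

lemma invWeight_mul_periodicProfile_of_lt (hw : w ≠ 0) (hkM : k < M) (hMN : M ≤ N) :
    invWeight w k * periodicProfile w f M N k = f k := by
  rw [periodicProfile, Nat.mod_eq_of_lt (hkM.trans_le hMN), if_pos hkM,
    mul_inv_cancel_left₀ (invWeight_ne_zero hw k)]

lemma periodicProfile_of_le_of_lt (hMk : M ≤ k) (hkN : k < N) :
    periodicProfile w f M N k = 0 := by
  rw [periodicProfile, Nat.mod_eq_of_lt hkN, if_neg hMk.not_gt]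

end DivisionRing

section Field

variable [Field 𝕜] {w : 𝕜}

lemma pow_succ_mul_invWeight_succ (hw : w ≠ 0) (k : ℕ) :
    w ^ (k + 1) * invWeight w (k + 1) = invWeight w k := by
  rw [invWeight, invWeight, Nat.choose_two_succ_succ, pow_add w⁻¹, mul_left_comm, ← mul_pow,
    mul_inv_cancel₀ hw, one_pow, mul_one]

variable {A : (ℕ → 𝕜) → ℕ → 𝕜} (hA : ∀ x k, A x k = w ^ (k + 1) * x (k + 1))
include hA

lemma iterate_invWeight_mul (hw : w ≠ 0) (n : ℕ) (z : ℕ → 𝕜) :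
    A^[n] (fun k ↦ invWeight w k * z k) = fun k ↦ invWeight w k * z (k + n) := by
  induction n generalizing z with
  | zero => rfl
  | succ n ih =>
    have hshift : A (fun k ↦ invWeight w k * z k) = fun k ↦ invWeight w k * z (k + 1) := by
      funext k
      rw [hA, ← pow_succ_mul_invWeight_succ hw k]
      ring
    simp only [Function.iterate_succ_apply, hshift, ih, add_assoc]

lemma iterate_invWeight_mul_of_periodic (hw : w ≠ 0) {N : ℕ} {z : ℕ → 𝕜}
    (hz : Function.Periodic z N) :
    A^[N] (fun k ↦ invWeight w k * z k) = fun k ↦ invWeight w k * z k := by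
  rw [iterate_invWeight_mul hA hw]
  exact funext fun k ↦ by rw [hz k]

end Field

section NormedField

variable [NormedField 𝕜] {w : 𝕜} {f : ℕ → 𝕜} {M N : ℕ}

lemma tendsto_invWeight (hw : 1 < ‖w‖) : Tendsto (invWeight w) atTop (𝓝 0) :=
  (tendsto_pow_atTop_nhds_zero_of_norm_lt_one
      (by rwa [norm_inv, inv_lt_one₀ (one_pos.trans hw)])).comp
    (tendsto_atTop_mono Nat.le_choose_two_succ tendsto_id)

lemma tendsto_invWeight_mul (hw : 1 < ‖w‖) {z : ℕ → 𝕜} {C : ℝ} (hC : ∀ k, ‖z k‖ ≤ C) :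
    Tendsto (fun k ↦ invWeight w k * z k) atTop (𝓝 0) :=
  (tendsto_invWeight hw).zero_mul_isBoundedUnder_le (isBoundedUnder_of ⟨C, hC⟩)

lemma tendsto_iterate_invWeight_mul (hw : 1 < ‖w‖) {A : (ℕ → 𝕜) → ℕ → 𝕜}
    (hA : ∀ x k, A x k = w ^ (k + 1) * x (k + 1)) {z : ℕ → 𝕜} {C : ℝ} (hC : ∀ k, ‖z k‖ ≤ C)
    (n : ℕ) : Tendsto (A^[n] fun k ↦ invWeight w k * z k) atTop (𝓝 0) := by
  rw [iterate_invWeight_mul hA (norm_pos_iff.mp (one_pos.trans hw))]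
  exact tendsto_invWeight_mul hw fun k ↦ hC (k + n)

lemma norm_periodicProfile_le (w : 𝕜) (f : ℕ → 𝕜) (M N k : ℕ) :
    ‖periodicProfile w f M N k‖ ≤ ∑ r ∈ range M, ‖(invWeight w r)⁻¹ * f r‖ := by
  unfold periodicProfile
  split_ifs with h
  · exact single_le_sum (f := fun r ↦ ‖(invWeight w r)⁻¹ * f r‖) (fun _ _ ↦ norm_nonneg _)
      (mem_range.2 h)
  · rw [norm_zero]
    exact sum_nonneg fun _ _ ↦ norm_nonneg _

lemma norm_invWeight_mul_periodicProfile_sub_le (hw : w ≠ 0) (hMN : M ≤ N) {δ : ℝ}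
    (hf : ∀ k ≥ M, ‖f k‖ ≤ δ)
    (hN : ∀ k ≥ N, ‖invWeight w k‖ * ∑ r ∈ range M, ‖(invWeight w r)⁻¹ * f r‖ ≤ δ) (k : ℕ) :
    ‖invWeight w k * periodicProfile w f M N k - f k‖ ≤ 2 * δ := by
  have hδ : 0 ≤ δ := (norm_nonneg _).trans (hf M le_rfl)
  rcases lt_or_ge k M with hkM | hMk
  · rw [invWeight_mul_periodicProfile_of_lt hw hkM hMN, sub_self, norm_zero]
    positivity
  rcases lt_or_ge k N with hkN | hNk
  · rw [periodicProfile_of_le_of_lt hMk hkN, mul_zero, zero_sub, norm_neg]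
    linarith [hf k hMk]
  calc ‖invWeight w k * periodicProfile w f M N k - f k‖
      ≤ ‖invWeight w k‖ * ‖periodicProfile w f M N k‖ + ‖f k‖ := by
        rw [← norm_mul]; exact norm_sub_le _ _
    _ ≤ δ + δ := by
        gcongr
        · exact (mul_le_mul_of_nonneg_left (norm_periodicProfile_le ..) (norm_nonneg _)).trans
            (hN k hNk)
        · exact hf k hMk
    _ = 2 * δ := by ring

end NormedField

end WeightedShift

open WeightedShift ZeroAtInftyContinuousMap

/-- For the weighted backward shift `A` (0-based:
`A x k = w ^ (k+1) * x (k+1)`) with `|w| > 1` on `c₀` (sup norm), the set of periodic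
points `{x ∈ C^∞(A) | ∃ N ≥ 1, A^N x = x}` is dense in `c₀`. -/
theorem rolewicz_c0_periodic_points_dense {𝕜 : Type*} [RCLike 𝕜]
    (w : 𝕜) (hw : 1 < ‖w‖)
    (A : (ℕ → 𝕜) → ℕ → 𝕜) (hA : ∀ x k, A x k = w ^ (k + 1) * x (k + 1)) :
    Dense {x : ZeroAtInftyContinuousMap ℕ 𝕜 |
      (∀ n : ℕ, Filter.Tendsto (A^[n] ⇑x) Filter.atTop (nhds 0)) ∧
      ∃ N : ℕ, 0 < N ∧ A^[N] ⇑x = ⇑x} := by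
  have hw0 : w ≠ 0 := norm_pos_iff.mp (one_pos.trans hw)
  refine Metric.dense_iff.mpr fun f ε hε ↦ ?_
  obtain ⟨M, hM⟩ := eventually_atTop.mp
    (NormedAddGroup.tendsto_nhds_zero.mp f.tendsto_atTop (ε / 3) (by positivity))
  have hweight : ∀ᶠ k in atTop,
      ‖invWeight w k‖ * ∑ r ∈ range M, ‖(invWeight w r)⁻¹ * f r‖ < ε / 3 := by
    refine ((tendsto_invWeight hw).norm.mul_const _).eventually_lt_const ?_
    simpa using div_pos hε three_pos
  obtain ⟨N₀, hN₀⟩ := eventually_atTop.mp hweight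
  set N := max N₀ M + 1
  have hbound := norm_periodicProfile_le w f M N
  refine ⟨ofTendsto _ (tendsto_invWeight_mul hw hbound), ?_,
    tendsto_iterate_invWeight_mul hw hA hbound, N, by omega,
    iterate_invWeight_mul_of_periodic hA hw0 (periodicProfile_periodic w f M N)⟩
  have hdist : dist (ofTendsto _ (tendsto_invWeight_mul hw hbound)) f ≤ 2 * (ε / 3) :=
    (dist_le (by positivity)).2 fun k ↦ by
      rw [dist_eq_norm]
      exact norm_invWeight_mul_periodicProfile_sub_le hw0 (by omega)
        (fun k hk ↦ (hM k hk).le) (fun k hk ↦ (hN₀ k (by omega)).le) k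
  exact Metric.mem_ball.2 (by linarith)
end

section
/- Let w ∈ ℂ with |w| > 1, 1 ≤ p < ∞, and λ ∈ ℂ. The sequence y defined by y_k = λ^{k−1} / w^{k(k−1)/2} (k ∈ ℕ, with 0⁰ := 1) satisfies: y ∈ ℓ^p, y ≠ 0, y ∈ D(A), and Ay = λy. In particular, every λ ∈ ℂ is an eigenvalue of the weighted backward shift A on complex ℓ^p, so the spectrum of A is all of ℂ. -/
/-!
Any solution of the eigen-equation `w ^ (k + 1) * y (k + 1) = λ * y k` satisfies
`‖y (k + 1)‖ ≤ ‖y k‖ / 2` as soon as `‖w‖ ^ (k + 1) ≥ 2 ‖λ‖`, so by the ratio test it lies in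
`ℓ^1 ⊆ ℓ^p`. The given `y` solves that equation because the triangular exponent `k (k + 1) / 2`
grows by exactly `k + 1` from `k` to `k + 1`, and it is nonzero since `y 0 = 1`.
-/

open scoped ENNReal

open Filter

theorem Nat.succ_mul_succ_succ_div_two (k : ℕ) :
    (k + 1) * (k + 2) / 2 = k * (k + 1) / 2 + (k + 1) := by
  simpa [Nat.mul_comm] using Nat.triangle_succ (k + 1)

section

variable {𝕜 : Type*} [NormedField 𝕜]

theorem summable_norm_of_pow_succ_mul_succ_eq {w lam : 𝕜} (hw : 1 < ‖w‖) {y : ℕ → 𝕜}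
    (hy : ∀ k, w ^ (k + 1) * y (k + 1) = lam * y k) : Summable fun k ↦ ‖y k‖ := by
  refine summable_of_ratio_norm_eventually_le one_half_lt_one ?_
  have hpow : Tendsto (fun k : ℕ ↦ ‖w‖ ^ (k + 1)) atTop atTop :=
    (tendsto_pow_atTop_atTop_of_one_lt hw).comp (tendsto_add_atTop_nat 1)
  filter_upwards [hpow.eventually_ge_atTop (2 * ‖lam‖)] with k hk
  have hnorm : ‖w‖ ^ (k + 1) * ‖y (k + 1)‖ = ‖lam‖ * ‖y k‖ := by
    simpa only [norm_mul, norm_pow] using congrArg norm (hy k)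
  rw [norm_norm, norm_norm]
  refine le_of_mul_le_mul_left ?_ (pow_pos (one_pos.trans hw) (k + 1))
  calc ‖w‖ ^ (k + 1) * ‖y (k + 1)‖ = ‖lam‖ * ‖y k‖ := hnorm
    _ ≤ ‖w‖ ^ (k + 1) / 2 * ‖y k‖ := by gcongr; linarith
    _ = ‖w‖ ^ (k + 1) * (1 / 2 * ‖y k‖) := by ring

theorem memℓp_of_pow_succ_mul_succ_eq {w lam : 𝕜} (hw : 1 < ‖w‖) {y : ℕ → 𝕜}
    (hy : ∀ k, w ^ (k + 1) * y (k + 1) = lam * y k) {p : ℝ≥0∞} (hp : 1 ≤ p) : Memℓp y p :=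
  (memℓp_gen (by simpa using summable_norm_of_pow_succ_mul_succ_eq hw hy)).of_exponent_ge hp

def weightedShiftEigenseq (w lam : 𝕜) (k : ℕ) : 𝕜 := lam ^ k / w ^ (k * (k + 1) / 2)

theorem weightedShiftEigenseq_zero (w lam : 𝕜) : weightedShiftEigenseq w lam 0 = 1 := by
  simp [weightedShiftEigenseq]

theorem pow_succ_mul_weightedShiftEigenseq_succ {w : 𝕜} (hw : w ≠ 0) (lam : 𝕜) (k : ℕ) :
    w ^ (k + 1) * weightedShiftEigenseq w lam (k + 1) = lam * weightedShiftEigenseq w lam k := by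
  rw [weightedShiftEigenseq, weightedShiftEigenseq, Nat.succ_mul_succ_succ_div_two, pow_add]
  field_simp
  ring

end

theorem rolewicz_lp_eigenvalue_general (w : ℂ) (hw : 1 < ‖w‖)
    (p : ℝ≥0∞) (hp : 1 ≤ p)
    (A : (ℕ → ℂ) → ℕ → ℂ) (hA : ∀ x k, A x k = w ^ (k + 1) * x (k + 1))
    (lam : ℂ) (y : ℕ → ℂ)
    (hy : ∀ k : ℕ, y k = lam ^ k / w ^ (k * (k + 1) / 2)) :
    Memℓp y p ∧ y ≠ 0 ∧ Memℓp (A y) p ∧ A y = lam • y := by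
  obtain rfl : y = weightedShiftEigenseq w lam := funext hy
  have heigen := pow_succ_mul_weightedShiftEigenseq_succ (norm_pos_iff.mp (one_pos.trans hw)) lam
  have hAy : A (weightedShiftEigenseq w lam) = lam • weightedShiftEigenseq w lam :=
    funext fun k ↦ (hA _ k).trans (heigen k)
  have hmem : Memℓp (weightedShiftEigenseq w lam) p := memℓp_of_pow_succ_mul_succ_eq hw heigen hp
  refine ⟨hmem, fun h ↦ ?_, hAy ▸ hmem.const_smul lam, hAy⟩
  simpa [weightedShiftEigenseq_zero] using congrFun h 0

/-- Let `w ∈ ℂ`, `|w| > 1`, `1 ≤ p < ∞`, `λ ∈ ℂ`. The sequence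
`y_k = λ^{k-1} / w^{k(k-1)/2}` (1-based; 0-based: `y k = λ^k / w^{k(k+1)/2}`, with
`0⁰ = 1`) lies in `ℓ^p`, is nonzero, belongs to `D(A)`, and satisfies `Ay = λy` for the
weighted backward shift `A` (0-based: `A x k = w ^ (k+1) * x (k+1)`). In particular,
every `λ ∈ ℂ` is an eigenvalue of `A` on complex `ℓ^p`. -/
theorem rolewicz_lp_eigenvalue (w : ℂ) (hw : 1 < ‖w‖)
    (p : ℝ≥0∞) (hp : 1 ≤ p) (hp' : p ≠ ∞)
    (A : (ℕ → ℂ) → ℕ → ℂ) (hA : ∀ x k, A x k = w ^ (k + 1) * x (k + 1))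
    (lam : ℂ) (y : ℕ → ℂ)
    (hy : ∀ k : ℕ, y k = lam ^ k / w ^ (k * (k + 1) / 2)) :
    Memℓp y p ∧ y ≠ 0 ∧ Memℓp (A y) p ∧ A y = lam • y :=
  rolewicz_lp_eigenvalue_general w hw p hp A hA lam y hy
end

section
/- Let w ∈ ℂ with |w| > 1 and λ ∈ ℂ. The sequence y defined by y_k = λ^{k−1} / w^{k(k−1)/2} (k ∈ ℕ, with 0⁰ := 1) satisfies: y ∈ c₀, y ≠ 0, y ∈ D(A), and Ay = λy. In particular, every λ ∈ ℂ is an eigenvalue of the weighted backward shift A on complex c₀, so the spectrum of A is all of ℂ. -/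
/-!
With `T k = k (k + 1) / 2` one has `T (k + 1) = T k + (k + 1)`, so consecutive terms of
`y k = λ ^ k / w ^ T k` satisfy `y (k + 1) = (λ / w ^ (k + 1)) * y k`; multiplying by the weight
`w ^ (k + 1)` gives `A y = λ • y`. The same ratio `λ / w ^ (k + 1)` tends to `0` because
`‖w‖ > 1`, so the ratio test makes `‖y k‖` summable, hence `y → 0`, and then `A y = λ • y → 0`.
-/

open Filter Topology

theorem Nat.triangle_succ_add_one (k : ℕ) :
    (k + 1) * (k + 1 + 1) / 2 = k * (k + 1) / 2 + (k + 1) := by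
  have h := Nat.triangle_succ (k + 1)
  simp only [Nat.add_sub_cancel] at h
  rw [mul_comm, h, mul_comm]

section TriangularPowers

variable {𝕜 : Type*}

theorem pow_div_pow_triangle_succ [Field 𝕜] (c w : 𝕜) (k : ℕ) :
    c ^ (k + 1) / w ^ ((k + 1) * (k + 1 + 1) / 2)
      = c / w ^ (k + 1) * (c ^ k / w ^ (k * (k + 1) / 2)) := by
  rw [Nat.triangle_succ_add_one, pow_add, pow_succ]
  ring

theorem tendsto_pow_div_pow_triangle_zero [NormedField 𝕜] {w : 𝕜} (hw : 1 < ‖w‖) (c : 𝕜) :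
    Tendsto (fun k : ℕ ↦ c ^ k / w ^ (k * (k + 1) / 2)) atTop (𝓝 0) := by
  set y : ℕ → 𝕜 := fun k ↦ c ^ k / w ^ (k * (k + 1) / 2)
  have h_ratio : Tendsto (fun k : ℕ ↦ ‖c‖ / ‖w‖ ^ (k + 1)) atTop (𝓝 0) :=
    tendsto_const_nhds.div_atTop <|
      (tendsto_pow_atTop_atTop_of_one_lt hw).comp (tendsto_add_atTop_nat 1)
  have h_contract : ∀ᶠ k in atTop, ‖‖y (k + 1)‖‖ ≤ 2⁻¹ * ‖‖y k‖‖ := by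
    filter_upwards [h_ratio.eventually (ge_mem_nhds (by norm_num : (0 : ℝ) < 2⁻¹))] with k hk
    simp only [y, norm_norm, pow_div_pow_triangle_succ, norm_mul, norm_div, norm_pow] at hk ⊢
    exact mul_le_mul_of_nonneg_right hk (by positivity)
  have h_summable :=
    summable_of_ratio_norm_eventually_le (f := fun k ↦ ‖y k‖) (by norm_num) h_contract
  exact tendsto_zero_iff_norm_tendsto_zero.mpr h_summable.tendsto_atTop_zero

end TriangularPowers

/-- Let `w ∈ ℂ`, `|w| > 1`, `λ ∈ ℂ`. The sequence
`y_k = λ^{k-1} / w^{k(k-1)/2}` (1-based; 0-based: `y k = λ^k / w^{k(k+1)/2}`, with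
`0⁰ = 1`) lies in `c₀`, is nonzero, belongs to `D(A)`, and satisfies `Ay = λy` for the
weighted backward shift `A` (0-based: `A x k = w ^ (k+1) * x (k+1)`). In particular,
every `λ ∈ ℂ` is an eigenvalue of `A` on complex `c₀`. -/
theorem rolewicz_c0_eigenvalue (w : ℂ) (hw : 1 < ‖w‖)
    (A : (ℕ → ℂ) → ℕ → ℂ) (hA : ∀ x k, A x k = w ^ (k + 1) * x (k + 1))
    (lam : ℂ) (y : ℕ → ℂ)
    (hy : ∀ k : ℕ, y k = lam ^ k / w ^ (k * (k + 1) / 2)) :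
    Filter.Tendsto y Filter.atTop (nhds 0) ∧ y ≠ 0 ∧
    Filter.Tendsto (A y) Filter.atTop (nhds 0) ∧ A y = lam • y := by
  have hw0 : w ≠ 0 := norm_pos_iff.mp (one_pos.trans hw)
  have h_eigen : A y = lam • y := by
    funext k
    rw [hA, Pi.smul_apply, smul_eq_mul, hy, hy, pow_div_pow_triangle_succ, ← mul_assoc,
      mul_div_cancel₀ _ (pow_ne_zero _ hw0)]
  have h_decay : Tendsto y atTop (𝓝 0) := by
    simpa only [← funext hy] using tendsto_pow_div_pow_triangle_zero hw lam
  refine ⟨h_decay, fun h ↦ ?_, ?_, h_eigen⟩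
  · simpa [hy] using congrFun h 0
  · rw [h_eigen, ← smul_zero lam]
    exact h_decay.const_smul lam
end
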